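/- arXiv:2310.09072 — 10 statements merged into one kernel-verified Lean document; each statement's English description precedes it below -/
import Mathlib

section
/- If β is flat and X ∈ RE(β) is a regular element of β, then β(Y,Z) ∈ B_X(V) ∩ (B_X(V))^⊥ for every Y ∈ U and every Z ∈ ker B_X; that is, the span of β(U × ker B_X) is contained in B_X(V) ∩ (B_X(V))^⊥. -/
/-!
Orthogonality is immediate from flatness: `⟨β(X,T), β(Y,Z)⟩ = ⟨β(X,Z), β(Y,T)⟩ = 0`.
Membership in `B_X(V)` comes from lower semicontinuity of rank: if `β(Y,Z) ∉ B_X(V)`, the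
map `(v, s) ↦ β(X + tY, v) + s β(Y,Z)` has rank `rank B_X + 1` at `t = 0`, hence at least that
for some `t ≠ 0`; its range then lies in `B_{X+tY}(V)` because `β(X + tY, Z) = t β(Y,Z)`,
contradicting regularity.
-/

open Module LinearMap

section Perturbation

variable {K E F : Type*} [Field K] [Infinite K] [AddCommGroup E] [Module K E]
  [FiniteDimensional K E] [AddCommGroup F] [Module K F]

/-- If `P` is a left inverse of `L`, a vector killed by `L + t • M` is an eigenvector of
`P ∘ M` for the eigenvalue `-t⁻¹`; avoiding the finitely many eigenvalues keeps `L + t • M`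
injective. -/
theorem exists_ne_zero_injective_add_smul {L : E →ₗ[K] F} (hL : Function.Injective L)
    (M : E →ₗ[K] F) : ∃ t : K, t ≠ 0 ∧ Function.Injective (L + t • M) := by
  obtain ⟨P, hP⟩ := L.exists_leftInverse_of_injective (ker_eq_bot.mpr hL)
  obtain ⟨μ, hμ⟩ := ((End.finite_hasEigenvalue (P ∘ₗ M)).union
    (Set.finite_singleton (0 : K))).infinite_compl.nonempty
  simp only [Set.mem_compl_iff, Set.mem_union, Set.mem_ofPred_eq, Set.mem_singleton_iff,
    not_or] at hμ
  obtain ⟨hμ, hμ0⟩ := hμ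
  refine ⟨-μ⁻¹, neg_ne_zero.mpr (inv_ne_zero hμ0), ?_⟩
  rw [← ker_eq_bot, eq_bot_iff]
  intro x hx
  by_contra hx0
  refine hμ (End.hasEigenvalue_of_hasEigenvector ⟨End.mem_eigenspace_iff.mpr ?_, hx0⟩)
  have hPx : x - μ⁻¹ • P (M x) = 0 := by
    simpa [sub_eq_add_neg, ← comp_apply P L, hP] using congr(P $(mem_ker.mp hx))
  rw [sub_eq_zero] at hPx
  rw [comp_apply]
  nth_rewrite 2 [hPx]
  rw [smul_smul, mul_inv_cancel₀ hμ0, one_smul]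

theorem exists_ne_zero_finrank_range_le_add_smul (L M : E →ₗ[K] F) :
    ∃ t : K, t ≠ 0 ∧ finrank K (range L) ≤ finrank K (range (L + t • M)) := by
  obtain ⟨E', hE'⟩ := (ker L).exists_isCompl
  have hinj : Function.Injective (L ∘ₗ E'.subtype) := by
    rw [← ker_eq_bot, ker_comp, ← Submodule.disjoint_iff_comap_eq_bot]
    exact hE'.disjoint.symm
  obtain ⟨t, ht0, ht⟩ := exists_ne_zero_injective_add_smul hinj (M ∘ₗ E'.subtype)
  refine ⟨t, ht0, ?_⟩
  have hE'rank : finrank K (range L) = finrank K E' := by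
    have := Submodule.finrank_add_eq_of_isCompl hE'
    have := L.finrank_range_add_finrank_ker
    omega
  rw [hE'rank, ← finrank_range_of_inj ht, ← smul_comp, ← add_comp]
  exact Submodule.finrank_mono (range_comp_le_range _ _)

end Perturbation

section Bilinear

variable {K U V W : Type*} [Field K] [AddCommGroup U] [Module K U] [AddCommGroup V] [Module K V]
  [AddCommGroup W] [Module K W]

theorem apply_mem_range_of_apply_eq_zero [Infinite K] [FiniteDimensional K V]
    [FiniteDimensional K W] (β : U →ₗ[K] V →ₗ[K] W) {X : U}
    (hreg : ∀ Z : U, finrank K (range (β Z)) ≤ finrank K (range (β X)))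
    (Y : U) {Z : V} (hZ : β X Z = 0) : β Y Z ∈ range (β X) := by
  by_contra hw
  let L : K → V × K →ₗ[K] W := fun t =>
    (β (X + t • Y)).coprod (toSpanSingleton K W (β Y Z))
  have hL : ∀ t, L t = L 0 + t • (β Y).coprod 0 := by
    intro t
    ext <;> simp [L]
  obtain ⟨t, ht0, ht⟩ := exists_ne_zero_finrank_range_le_add_smul (L 0) ((β Y).coprod 0)
  have hrank0 : finrank K (range (L 0)) = finrank K (range (β X)) + 1 := by
    rw [range_coprod, range_toSpanSingleton, zero_smul, add_zero]
    exact Submodule.finrank_sup_span_singleton hw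
  have hrange : range (L t) ≤ range (β (X + t • Y)) := by
    rw [range_coprod, sup_le_iff, range_toSpanSingleton, Submodule.span_singleton_le_iff_mem]
    exact ⟨le_rfl, t⁻¹ • Z, by simp [hZ, smul_smul, inv_mul_cancel₀ ht0]⟩
  have := Submodule.finrank_mono hrange
  have := hreg (X + t • Y)
  rw [← hL] at ht
  omega

theorem apply_mem_orthogonal_range_of_flat (b : LinearMap.BilinForm K W)
    (β : U →ₗ[K] V →ₗ[K] W)
    (hflat : ∀ (X Z : U) (Y T : V), b (β X Y) (β Z T) = b (β X T) (β Z Y))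
    {X : U} (Y : U) {Z : V} (hZ : β X Z = 0) : β Y Z ∈ b.orthogonal (range (β X)) := by
  rw [LinearMap.BilinForm.mem_orthogonal_iff]
  rintro _ ⟨T, rfl⟩
  rw [hflat, hZ, map_zero, LinearMap.zero_apply]

end Bilinear

theorem stmt_3_general
    {U : Type} [AddCommGroup U] [Module ℝ U]
    {V : Type} [AddCommGroup V] [Module ℝ V] [FiniteDimensional ℝ V]
    {W : Type} [AddCommGroup W] [Module ℝ W] [FiniteDimensional ℝ W]
    (b : LinearMap.BilinForm ℝ W)
    (β : U →ₗ[ℝ] V →ₗ[ℝ] W)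
    (hflat : ∀ (X Z : U) (Y T : V), b (β X Y) (β Z T) = b (β X T) (β Z Y))
    (X : U)
    (hreg : ∀ Z : U,
      finrank ℝ (LinearMap.range (β Z)) ≤ finrank ℝ (LinearMap.range (β X))) :
    ∀ (Y : U) (Z : V), β X Z = 0 →
      β Y Z ∈ LinearMap.range (β X) ⊓ b.orthogonal (LinearMap.range (β X)) :=
  fun Y _ hZ => ⟨apply_mem_range_of_apply_eq_zero β hreg Y hZ,
    apply_mem_orthogonal_range_of_flat b β hflat Y hZ⟩

/-- If β is flat and X is a regular element, then
β(Y,Z) ∈ B_X(V) ∩ (B_X(V))^⊥ for every Y ∈ U and Z ∈ ker B_X. -/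
theorem stmt_3
    {U : Type} [AddCommGroup U] [Module ℝ U] [FiniteDimensional ℝ U]
    {V : Type} [AddCommGroup V] [Module ℝ V] [FiniteDimensional ℝ V]
    {W : Type} [AddCommGroup W] [Module ℝ W] [FiniteDimensional ℝ W]
    (b : LinearMap.BilinForm ℝ W) (hbsymm : ∀ ξ η, b ξ η = b η ξ)
    (hbnd : b.Nondegenerate)
    (β : U →ₗ[ℝ] V →ₗ[ℝ] W)
    (hflat : ∀ (X Z : U) (Y T : V), b (β X Y) (β Z T) = b (β X T) (β Z Y))
    (X : U)
    (hreg : ∀ Z : U,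
      finrank ℝ (LinearMap.range (β Z)) ≤ finrank ℝ (LinearMap.range (β X))) :
    ∀ (Y : U) (Z : V), β X Z = 0 →
      β Y Z ∈ LinearMap.range (β X) ⊓ b.orthogonal (LinearMap.range (β X)) :=
  stmt_3_general b β hflat X hreg
end

section
/- Let α : V × V → Λ be a symmetric bilinear map satisfying ⟨α(X,Y),w⟩ = −(X,Y) for all X,Y ∈ V, and assume the associated bilinear map β is flat. Then S(β) = U₀ ⊕ U₀, where U₀ is the image of S(β) under the projection of W = Λ ⊕ Λ onto its first factor. -/
/-!
The span `S(β)` is stable under `(a, b) ↦ (a, -b)`, because `β Y X = ((β X Y).1, -(β X Y).2)` by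
symmetry of `α`, and under `(a, b) ↦ (-b, a)`, because `β (J X) Y = (-(β X Y).2, (β X Y).1)` by
`J ∘ J = -id`. Averaging with the first symmetry shows `(a, b) ∈ S(β) → (a, 0) ∈ S(β)`, and the
second one moves the first factor into the second, so `S(β) = U₀ × U₀`.
-/

open Module

namespace Submodule

variable {R M : Type*} [Ring R] [AddCommGroup M] [Module R M]

theorem apply_mem_span_of_forall_mem {s : Set M} (f : M →ₗ[R] M) (hf : ∀ x ∈ s, f x ∈ s)
    {z : M} (hz : z ∈ span R s) : f z ∈ span R s :=
  (map_span_le f s _).2 (fun x hx ↦ subset_span (hf x hx)) (mem_map_of_mem hz)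

theorem eq_prod_map_fst_of_forall_mem [Invertible (2 : R)] {S : Submodule R (M × M)}
    (hconj : ∀ a b, (a, b) ∈ S → (a, -b) ∈ S) (hrot : ∀ a b, (a, b) ∈ S → (-b, a) ∈ S) :
    S = (S.map (LinearMap.fst R M M)).prod (S.map (LinearMap.fst R M M)) := by
  have fst_mem : ∀ a b, (a, b) ∈ S → (a, (0 : M)) ∈ S := by
    intro a b h
    have key : (⅟2 : R) • (a, b) + (⅟2 : R) • (a, -b) = (a, (0 : M)) := by
      simp only [Prod.smul_mk, Prod.mk_add_mk, invOf_two_smul_add_invOf_two_smul, smul_neg,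
        add_neg_cancel]
    exact key ▸ S.add_mem (S.smul_mem _ h) (S.smul_mem _ (hconj a b h))
  have mem_of_mem_map : ∀ a ∈ S.map (LinearMap.fst R M M), (a, (0 : M)) ∈ S := by
    rintro _ ⟨⟨a, b⟩, h, rfl⟩
    exact fst_mem a b h
  apply le_antisymm
  · rintro ⟨a, b⟩ h
    refine ⟨⟨(a, b), h, rfl⟩, ?_⟩
    simpa using neg_mem (mem_map_of_mem (f := LinearMap.fst R M M) (hrot a b h))
  · rintro ⟨a, b⟩ ⟨ha, hb⟩
    have hb' : ((0 : M), b) ∈ S := by simpa using hrot b 0 (mem_of_mem_map b hb)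
    simpa using S.add_mem (mem_of_mem_map a ha) hb'

end Submodule

section AssocBilin

variable {R V L : Type*} [CommRing R] [AddCommGroup V] [Module R V] [AddCommGroup L] [Module R L]

def assocBilin (J : V →ₗ[R] V) (α : V →ₗ[R] V →ₗ[R] L) (X Y : V) : L × L :=
  (α X Y + α (J X) (J Y), α X (J Y) - α (J X) Y)

variable {J : V →ₗ[R] V} {α : V →ₗ[R] V →ₗ[R] L}

theorem assocBilin_swap (hα : ∀ X Y, α X Y = α Y X) (X Y : V) :
    assocBilin J α Y X = ((assocBilin J α X Y).1, -(assocBilin J α X Y).2) := by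
  simp only [assocBilin, hα Y X, hα (J Y) (J X), hα Y (J X), hα (J Y) X, neg_sub]

theorem assocBilin_complexStructure_left (hJ : ∀ X, J (J X) = -X) (X Y : V) :
    assocBilin J α (J X) Y = (-(assocBilin J α X Y).2, (assocBilin J α X Y).1) := by
  simp only [assocBilin, hJ, map_neg, LinearMap.neg_apply, Prod.mk.injEq]
  constructor <;> abel

theorem span_assocBilin_eq_prod [Invertible (2 : R)] (hJ : ∀ X, J (J X) = -X)
    (hα : ∀ X Y, α X Y = α Y X) :
    let S := Submodule.span R {z | ∃ X Y, z = assocBilin J α X Y}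
    S = (S.map (LinearMap.fst R L L)).prod (S.map (LinearMap.fst R L L)) := by
  refine Submodule.eq_prod_map_fst_of_forall_mem (fun a b h ↦ ?_) (fun a b h ↦ ?_)
  · simpa using Submodule.apply_mem_span_of_forall_mem
      (LinearMap.prodMap LinearMap.id (-LinearMap.id))
      (by rintro _ ⟨X, Y, rfl⟩; exact ⟨Y, X, (assocBilin_swap hα X Y).symm⟩) h
  · simpa using Submodule.apply_mem_span_of_forall_mem
      ((-LinearMap.snd R L L).prod (LinearMap.fst R L L))
      (by rintro _ ⟨X, Y, rfl⟩; exact ⟨J X, Y, (assocBilin_complexStructure_left hJ X Y).symm⟩) h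

end AssocBilin

theorem stmt_4_general
    {V : Type} [AddCommGroup V] [Module ℝ V]
    (J : V →ₗ[ℝ] V) (hJ : ∀ X, J (J X) = -X)
    {Λ : Type} [AddCommGroup Λ] [Module ℝ Λ]
    (α : V →ₗ[ℝ] V →ₗ[ℝ] Λ) (hαsymm : ∀ X Y, α X Y = α Y X)
    (β : V → V → Λ × Λ)
    (hβ : ∀ X Y, β X Y = (α X Y + α (J X) (J Y), α X (J Y) - α (J X) Y))
    (Sβ : Submodule ℝ (Λ × Λ))
    (hSβ : Sβ = Submodule.span ℝ {z : Λ × Λ | ∃ X Y, z = β X Y})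
    (U₀ : Submodule ℝ Λ)
    (hU₀ : U₀ = Submodule.map (LinearMap.fst ℝ Λ Λ) Sβ) :
    Sβ = U₀.prod U₀ := by
  obtain rfl : β = assocBilin J α := funext₂ hβ
  subst hSβ hU₀
  exact span_assocBilin_eq_prod hJ hαsymm

/-- If ⟨α(X,Y),w⟩ = −(X,Y) and β is flat, then S(β) = U₀ ⊕ U₀. -/
theorem stmt_4
    (n p : ℕ) (hn : 1 ≤ n) (hp : 2 ≤ p)
    {V : Type} [AddCommGroup V] [Module ℝ V] [FiniteDimensional ℝ V]
    (hV : finrank ℝ V = 2 * n)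
    (J : V →ₗ[ℝ] V) (hJ : ∀ X, J (J X) = -X)
    {Λ : Type} [AddCommGroup Λ] [Module ℝ Λ] [FiniteDimensional ℝ Λ]
    (hΛ : finrank ℝ Λ = p)
    (ip : LinearMap.BilinForm ℝ Λ) (hipsymm : ∀ ξ η, ip ξ η = ip η ξ)
    (e : Basis (Fin p) ℝ Λ)
    (he : ∀ i j, ip (e i) (e j) =
      if i = j then (if (i : ℕ) = 0 then (-1 : ℝ) else 1) else 0)
    (g : LinearMap.BilinForm ℝ V) (hgsymm : ∀ X Y, g X Y = g Y X)
    (hgpos : ∀ X : V, X ≠ 0 → 0 < g X X)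
    (hgJ : ∀ X Y, g (J X) (J Y) = g X Y)
    (α : V →ₗ[ℝ] V →ₗ[ℝ] Λ) (hαsymm : ∀ X Y, α X Y = α Y X)
    (w : Λ) (hw0 : w ≠ 0) (hww : ip w w = 0)
    (hαw : ∀ X Y, ip (α X Y) w = - g X Y)
    (bW : LinearMap.BilinForm ℝ (Λ × Λ))
    (hbW : ∀ ξ η, bW ξ η = ip ξ.1 η.1 - ip ξ.2 η.2)
    (β : V → V → Λ × Λ)
    (hβ : ∀ X Y, β X Y = (α X Y + α (J X) (J Y), α X (J Y) - α (J X) Y))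
    (hflat : ∀ X Y Z T, bW (β X Y) (β Z T) = bW (β X T) (β Z Y))
    (Sβ : Submodule ℝ (Λ × Λ))
    (hSβ : Sβ = Submodule.span ℝ {z : Λ × Λ | ∃ X Y, z = β X Y})
    (U₀ : Submodule ℝ Λ)
    (hU₀ : U₀ = Submodule.map (LinearMap.fst ℝ Λ Λ) Sβ) :
    Sβ = U₀.prod U₀ :=
  stmt_4_general J hJ α hαsymm β hβ Sβ hSβ U₀ hU₀
end

section
/- Let α : V × V → Λ be a symmetric bilinear map satisfying ⟨α(X,Y),w⟩ = −(X,Y) for all X,Y ∈ V, with associated bilinear map β flat. If the subspace S(β) ⊂ W is degenerate, then 1 ≤ s ≤ p−1 and there exists a light-like vector v ∈ U₀ (v ≠ 0, ⟨v,v⟩ = 0) such that S(β) ∩ S(β)^⊥ = span{(v,0),(0,v)}. -/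
open Module Submodule
open LinearMap (BilinForm IsAdjointPair inl)

/-!
Identify `Λ × Λ` with the complexification `Λ ⊗ ℂ`. Symmetry of `α` gives
`conj β(X, Y) = β(Y, X)` and `J² = -1` gives `i β(X, Y) = β(JX, Y)`, so `S(β)` is stable under
conjugation and under `i`. Both are self-adjoint for `⟨⟨·,·⟩⟩`, so the radical `N` of `S(β)` is
stable too, hence `N = M ⊕ iM` with `M = {u | (u, 0) ∈ N}`. This `M` is totally isotropic in the
Lorentzian space `Λ`, so it is a light-like line `ℝ v`; finally `v ∈ U₀ ⊆ v^⊥ ≠ Λ`.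
-/

theorem Submodule.span_le_comap_span_of_mapsTo {R M : Type*} [Semiring R] [AddCommMonoid M]
    [Module R M] {f : M →ₗ[R] M} {s : Set M} (hf : Set.MapsTo f s s) :
    span R s ≤ (span R s).comap f :=
  span_le.mpr fun _ hx => subset_span (hf hx)

namespace LinearMap.BilinForm

variable {R M : Type*} [CommRing R] [AddCommGroup M] [Module R M] {B : BilinForm R M}

theorem orthogonal_le_comap_of_isAdjointPair {f g : M →ₗ[R] M} (hfg : IsAdjointPair B B f g)
    {S : Submodule R M} (hS : S ≤ S.comap f) : B.orthogonal S ≤ (B.orthogonal S).comap g :=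
  fun z hz y hy => by
    rw [← hfg]
    exact hz _ (hS hy)

theorem inf_orthogonal_le_comap_of_isSelfAdjoint {f : M →ₗ[R] M} (hf : B.IsSelfAdjoint f)
    {S : Submodule R M} (hS : S ≤ S.comap f) :
    S ⊓ B.orthogonal S ≤ (S ⊓ B.orthogonal S).comap f := by
  rw [comap_inf]
  exact inf_le_inf hS (B.orthogonal_le_comap_of_isAdjointPair hf hS)

end LinearMap.BilinForm

section ComplexPair

variable (R Λ : Type*) [CommRing R] [AddCommGroup Λ] [Module R Λ]

/-- Identifying `Λ × Λ` with `Λ ⊗ ℂ` via `(a, b) ↦ a + i b`, this is complex conjugation. -/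
def prodConj : Λ × Λ →ₗ[R] Λ × Λ := (LinearMap.fst R Λ Λ).prod (-LinearMap.snd R Λ Λ)

/-- Multiplication by `i` under the identification of `prodConj`. -/
def prodMulI : Λ × Λ →ₗ[R] Λ × Λ := (-LinearMap.snd R Λ Λ).prod (LinearMap.fst R Λ Λ)

variable {R Λ}

@[simp] theorem prodConj_apply (z : Λ × Λ) : prodConj R Λ z = (z.1, -z.2) := rfl

@[simp] theorem prodMulI_apply (z : Λ × Λ) : prodMulI R Λ z = (-z.2, z.1) := rfl

theorem isSelfAdjoint_prodConj {ip : BilinForm R Λ} {bW : BilinForm R (Λ × Λ)}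
    (hbW : ∀ ξ η, bW ξ η = ip ξ.1 η.1 - ip ξ.2 η.2) : bW.IsSelfAdjoint (prodConj R Λ) :=
  fun y z => by
    simp only [hbW, prodConj_apply, map_neg, LinearMap.neg_apply, sub_neg_eq_add]

theorem isSelfAdjoint_prodMulI {ip : BilinForm R Λ} {bW : BilinForm R (Λ × Λ)}
    (hbW : ∀ ξ η, bW ξ η = ip ξ.1 η.1 - ip ξ.2 η.2) : bW.IsSelfAdjoint (prodMulI R Λ) :=
  fun y z => by
    simp only [hbW, prodMulI_apply, map_neg, LinearMap.neg_apply]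
    ring

section Complexify

variable {V : Type*} [AddCommGroup V] [Module R V] {J : V →ₗ[R] V} {α : V →ₗ[R] V →ₗ[R] Λ}
  {β : V → V → Λ × Λ}

theorem prodConj_complexify
    (hβ : ∀ X Y, β X Y = (α X Y + α (J X) (J Y), α X (J Y) - α (J X) Y))
    (hαsymm : ∀ X Y, α X Y = α Y X) (X Y : V) :
    prodConj R Λ (β X Y) = β Y X := by
  rw [hβ, hβ, prodConj_apply, hαsymm Y X, hαsymm (J Y) (J X), hαsymm Y (J X), hαsymm (J Y) X,
    neg_sub]

theorem prodMulI_complexify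
    (hβ : ∀ X Y, β X Y = (α X Y + α (J X) (J Y), α X (J Y) - α (J X) Y))
    (hJ : ∀ X, J (J X) = -X) (X Y : V) :
    prodMulI R Λ (β X Y) = β (J X) Y := by
  simp only [hβ, prodMulI_apply, hJ, map_neg, LinearMap.neg_apply, Prod.mk.injEq]
  constructor <;> abel

end Complexify

theorem Submodule.eq_prod_comap_inl [Invertible (2 : R)] {N : Submodule R (Λ × Λ)}
    (hC : N ≤ N.comap (prodConj R Λ)) (hI : N ≤ N.comap (prodMulI R Λ)) :
    N = (N.comap (inl R Λ Λ)).prod (N.comap (inl R Λ Λ)) := by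
  have inr_mem : ∀ b, ((b, 0) : Λ × Λ) ∈ N → ((0, b) : Λ × Λ) ∈ N := fun b hb => by
    simpa using hI hb
  ext z
  constructor
  · intro hz
    have hfst : ((z.1, 0) : Λ × Λ) ∈ N := by
      convert N.smul_mem (⅟2 : R) (N.add_mem hz (hC hz)) using 1
      ext <;> simp
    have hsnd : ((0, z.2) : Λ × Λ) ∈ N := by
      convert N.smul_mem (⅟2 : R) (N.sub_mem hz (hC hz)) using 1
      ext <;> simp
    refine ⟨hfst, ?_⟩
    simpa using N.neg_mem (hI hsnd)
  · rintro ⟨h₁, h₂⟩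
    simpa using N.add_mem h₁ (inr_mem _ h₂)

end ComplexPair

namespace LinearMap.BilinForm

variable {Λ ι : Type*} [AddCommGroup Λ] [Module ℝ Λ] [Fintype ι] [DecidableEq ι]
  {ip : BilinForm ℝ Λ} {e : Basis ι ℝ Λ} {i₀ : ι}

variable (ip e i₀) in
def IsLorentzOrthonormalBasis : Prop :=
  ∀ i j, ip (e i) (e j) = if i = j then (if i = i₀ then -1 else 1) else 0

theorem apply_eq_sum_sign_mul_repr
    (he : ip.IsLorentzOrthonormalBasis e i₀) (u z : Λ) :
    ip u z = ∑ i, (if i = i₀ then -1 else 1) * (e.repr u i * e.repr z i) := by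
  conv_lhs => rw [← e.sum_repr u, ← e.sum_repr z]
  simp only [map_sum, map_smul, LinearMap.sum_apply, LinearMap.smul_apply, smul_eq_mul, he _ _,
    mul_ite, mul_zero, Finset.sum_ite_eq', Finset.mem_univ, if_true]
  refine Finset.sum_congr rfl fun i _ => ?_
  split_ifs <;> ring

theorem eq_zero_of_isotropic_of_repr_eq_zero
    (he : ip.IsLorentzOrthonormalBasis e i₀) {z : Λ}
    (hz : ip z z = 0) (hz₀ : e.repr z i₀ = 0) : z = 0 := by
  have hterm : ∀ i, (if i = i₀ then -1 else 1) * (e.repr z i * e.repr z i) = (e.repr z i) ^ 2 := by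
    intro i
    split_ifs with hi
    · simp [hi, hz₀]
    · ring
  rw [apply_eq_sum_sign_mul_repr he] at hz
  simp only [hterm] at hz
  have hsq := (Finset.sum_eq_zero_iff_of_nonneg fun i _ => sq_nonneg (e.repr z i)).mp hz
  exact e.repr.map_eq_zero_iff.mp (Finsupp.ext fun i => pow_eq_zero_iff two_ne_zero |>.mp
    (hsq i (Finset.mem_univ i)))

theorem eq_span_singleton_of_totallyIsotropic
    (he : ip.IsLorentzOrthonormalBasis e i₀)
    {M : Submodule ℝ Λ} (hM : ∀ u ∈ M, ∀ u' ∈ M, ip u u' = 0) {v : Λ} (hvM : v ∈ M)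
    (hv : v ≠ 0) : M = span ℝ {v} := by
  have hv₀ : e.repr v i₀ ≠ 0 := fun h =>
    hv (eq_zero_of_isotropic_of_repr_eq_zero he (hM v hvM v hvM) h)
  refine le_antisymm (fun u hu => ?_) (span_le.mpr (Set.singleton_subset_iff.mpr hvM))
  set z := e.repr u i₀ • v - e.repr v i₀ • u
  have hzM : z ∈ M := M.sub_mem (M.smul_mem _ hvM) (M.smul_mem _ hu)
  have hz : z = 0 :=
    eq_zero_of_isotropic_of_repr_eq_zero he (hM z hzM z hzM) (by simp [z, mul_comm])
  rw [mem_span_singleton]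
  refine ⟨e.repr u i₀ / e.repr v i₀, ?_⟩
  rw [sub_eq_zero] at hz
  rw [div_eq_inv_mul, mul_smul, hz, smul_smul, inv_mul_cancel₀ hv₀, one_smul]

theorem exists_apply_ne_zero
    (he : ip.IsLorentzOrthonormalBasis e i₀) {v : Λ}
    (hv : v ≠ 0) : ∃ x, ip x v ≠ 0 := by
  obtain ⟨i, hi⟩ : ∃ i, e.repr v i ≠ 0 := by
    by_contra! h
    exact hv (e.repr.map_eq_zero_iff.mp (Finsupp.ext h))
  refine ⟨e i, ?_⟩
  rw [apply_eq_sum_sign_mul_repr he, Finset.sum_eq_single i]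
  · split_ifs <;> simpa using hi
  · intro j _ hj
    simp [Ne.symm hj]
  · simp

end LinearMap.BilinForm

theorem stmt_5_general
    (p : ℕ) (hp : 2 ≤ p)
    {V : Type} [AddCommGroup V] [Module ℝ V]
    (J : V →ₗ[ℝ] V) (hJ : ∀ X, J (J X) = -X)
    {Λ : Type} [AddCommGroup Λ] [Module ℝ Λ] [FiniteDimensional ℝ Λ]
    (hΛ : finrank ℝ Λ = p)
    (ip : LinearMap.BilinForm ℝ Λ)
    (e : Basis (Fin p) ℝ Λ)
    (he : ∀ i j, ip (e i) (e j) =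
      if i = j then (if (i : ℕ) = 0 then (-1 : ℝ) else 1) else 0)
    (α : V →ₗ[ℝ] V →ₗ[ℝ] Λ) (hαsymm : ∀ X Y, α X Y = α Y X)
    (bW : LinearMap.BilinForm ℝ (Λ × Λ))
    (hbW : ∀ ξ η, bW ξ η = ip ξ.1 η.1 - ip ξ.2 η.2)
    (β : V → V → Λ × Λ)
    (hβ : ∀ X Y, β X Y = (α X Y + α (J X) (J Y), α X (J Y) - α (J X) Y))
    (Sβ : Submodule ℝ (Λ × Λ))
    (hSβ : Sβ = Submodule.span ℝ {z : Λ × Λ | ∃ X Y, z = β X Y})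
    (U₀ : Submodule ℝ Λ)
    (hU₀ : U₀ = Submodule.map (LinearMap.fst ℝ Λ Λ) Sβ)
    (s : ℕ) (hs : s = finrank ℝ U₀)
    (hdeg : Sβ ⊓ bW.orthogonal Sβ ≠ ⊥) :
    1 ≤ s ∧ s ≤ p - 1 ∧
      ∃ v : Λ, v ∈ U₀ ∧ v ≠ 0 ∧ ip v v = 0 ∧
        Sβ ⊓ bW.orthogonal Sβ =
          Submodule.span ℝ {((v, 0) : Λ × Λ), ((0, v) : Λ × Λ)} := by
  have he' : ip.IsLorentzOrthonormalBasis e ⟨0, by omega⟩ := fun i j => by simp [he, Fin.ext_iff]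
  have hSC : Sβ ≤ Sβ.comap (prodConj ℝ Λ) := hSβ ▸ span_le_comap_span_of_mapsTo
    fun _ ⟨X, Y, h⟩ => ⟨Y, X, by rw [h, prodConj_complexify hβ hαsymm]⟩
  have hSI : Sβ ≤ Sβ.comap (prodMulI ℝ Λ) := hSβ ▸ span_le_comap_span_of_mapsTo
    fun _ ⟨X, Y, h⟩ => ⟨J X, Y, by rw [h, prodMulI_complexify hβ hJ]⟩
  set N := Sβ ⊓ bW.orthogonal Sβ
  set M := N.comap (inl ℝ Λ Λ)
  have hN : N = M.prod M := eq_prod_comap_inl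
    (bW.inf_orthogonal_le_comap_of_isSelfAdjoint (isSelfAdjoint_prodConj hbW) hSC)
    (bW.inf_orthogonal_le_comap_of_isSelfAdjoint (isSelfAdjoint_prodMulI hbW) hSI)
  have hM : ∀ u ∈ M, ∀ u' ∈ M, ip u u' = 0 := fun u hu u' hu' => by
    simpa [hbW] using hu'.2 _ hu.1
  obtain ⟨v, hvM, hv⟩ : ∃ v ∈ M, v ≠ 0 :=
    exists_mem_ne_zero_of_ne_bot fun h => hdeg (by rw [hN, h, prod_bot])
  have hvU : v ∈ U₀ := hU₀ ▸ ⟨(v, 0), hvM.1, rfl⟩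
  have hU₀v : ∀ u ∈ U₀, ip u v = 0 := by
    rw [hU₀]
    rintro _ ⟨ξ, hξ, rfl⟩
    simpa [hbW] using hvM.2 ξ hξ
  refine ⟨?_, ?_, v, hvU, hv, hM v hvM v hvM, ?_⟩
  · rw [hs, ← finrank_span_singleton (K := ℝ) hv]
    exact finrank_mono (span_le.mpr (Set.singleton_subset_iff.mpr hvU))
  · obtain ⟨x, hx⟩ := ip.exists_apply_ne_zero he' hv
    have := finrank_lt fun h : U₀ = ⊤ => hx (hU₀v x (h ▸ mem_top))
    omega
  · rw [hN, ip.eq_span_singleton_of_totallyIsotropic he' hM hvM hv, ← LinearMap.span_inl_union_inr,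
      Set.image_singleton, Set.image_singleton, Set.singleton_union]
    rfl

/-- If β is flat and S(β) is degenerate, then 1 ≤ s ≤ p−1 and there is a
light-like v ∈ U₀ with S(β) ∩ S(β)^⊥ = span{(v,0),(0,v)}. -/
theorem stmt_5
    (n p : ℕ) (hn : 1 ≤ n) (hp : 2 ≤ p)
    {V : Type} [AddCommGroup V] [Module ℝ V] [FiniteDimensional ℝ V]
    (hV : finrank ℝ V = 2 * n)
    (J : V →ₗ[ℝ] V) (hJ : ∀ X, J (J X) = -X)
    {Λ : Type} [AddCommGroup Λ] [Module ℝ Λ] [FiniteDimensional ℝ Λ]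
    (hΛ : finrank ℝ Λ = p)
    (ip : LinearMap.BilinForm ℝ Λ) (hipsymm : ∀ ξ η, ip ξ η = ip η ξ)
    (e : Basis (Fin p) ℝ Λ)
    (he : ∀ i j, ip (e i) (e j) =
      if i = j then (if (i : ℕ) = 0 then (-1 : ℝ) else 1) else 0)
    (g : LinearMap.BilinForm ℝ V) (hgsymm : ∀ X Y, g X Y = g Y X)
    (hgpos : ∀ X : V, X ≠ 0 → 0 < g X X)
    (hgJ : ∀ X Y, g (J X) (J Y) = g X Y)
    (α : V →ₗ[ℝ] V →ₗ[ℝ] Λ) (hαsymm : ∀ X Y, α X Y = α Y X)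
    (w : Λ) (hw0 : w ≠ 0) (hww : ip w w = 0)
    (hαw : ∀ X Y, ip (α X Y) w = - g X Y)
    (bW : LinearMap.BilinForm ℝ (Λ × Λ))
    (hbW : ∀ ξ η, bW ξ η = ip ξ.1 η.1 - ip ξ.2 η.2)
    (β : V → V → Λ × Λ)
    (hβ : ∀ X Y, β X Y = (α X Y + α (J X) (J Y), α X (J Y) - α (J X) Y))
    (hflat : ∀ X Y Z T, bW (β X Y) (β Z T) = bW (β X T) (β Z Y))
    (Sβ : Submodule ℝ (Λ × Λ))
    (hSβ : Sβ = Submodule.span ℝ {z : Λ × Λ | ∃ X Y, z = β X Y})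
    (U₀ : Submodule ℝ Λ)
    (hU₀ : U₀ = Submodule.map (LinearMap.fst ℝ Λ Λ) Sβ)
    (s : ℕ) (hs : s = finrank ℝ U₀)
    (hdeg : Sβ ⊓ bW.orthogonal Sβ ≠ ⊥) :
    1 ≤ s ∧ s ≤ p - 1 ∧
      ∃ v : Λ, v ∈ U₀ ∧ v ≠ 0 ∧ ip v v = 0 ∧
        Sβ ⊓ bW.orthogonal Sβ =
          Submodule.span ℝ {((v, 0) : Λ × Λ), ((0, v) : Λ × Λ)} :=
  stmt_5_general p hp J hJ hΛ ip e he α hαsymm bW hbW β hβ Sβ hSβ U₀ hU₀ s hs hdeg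
end

section
/- Let α : V × V → Λ be a symmetric bilinear map satisfying ⟨α(X,Y),w⟩ = −(X,Y) for all X,Y ∈ V, with associated bilinear map β flat, and suppose S(β) is degenerate with v ∈ U₀ a light-like vector such that S(β) ∩ S(β)^⊥ = span{(v,0),(0,v)}. Then v and w are linearly independent and L = span{v,w} ⊂ Λ is a Lorentzian plane, i.e. the restriction of ⟨·,·⟩ to L is a nondegenerate form of signature (1,1); in particular ⟨v,w⟩ ≠ 0. -/
/-!
Since `(v, 0)` lies in the radical of `S(β)`, it is orthogonal to every `β X X`, i.e.
`⟨α X X + α (JX) (JX), v⟩ = 0`. If also `⟨v, w⟩ = 0`, then `v` and `w` are orthogonal null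
vectors of a Lorentzian space, hence proportional, and pairing with `w` would give
`-2 (X, X) = 0` for every `X`. So `⟨v, w⟩ ≠ 0`, and two null vectors with nonzero product
span a Lorentzian plane, with orthonormal basis `v / (2⟨v,w⟩) ± w`.
-/

open Module

namespace LinearMap.BilinForm

section LorentzBasis

variable {ι Λ : Type*} [DecidableEq ι] [AddCommGroup Λ] [Module ℝ Λ]

def IsLorentzBasis (ip : LinearMap.BilinForm ℝ Λ) (e : Basis ι ℝ Λ) (t : ι) : Prop :=
  ∀ i j, ip (e i) (e j) = if i = j then (if i = t then -1 else 1) else 0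

variable [Fintype ι] {ip : LinearMap.BilinForm ℝ Λ} {e : Basis ι ℝ Λ} {t : ι}

theorem IsLorentzBasis.apply_eq_sum (he : IsLorentzBasis ip e t) (x y : Λ) :
    ip x y = ∑ i, (if i = t then -1 else 1) * (e.repr x i * e.repr y i) := by
  unfold IsLorentzBasis at he
  conv_lhs => rw [← e.sum_repr x, ← e.sum_repr y]
  simp only [map_sum, map_smul, LinearMap.sum_apply, LinearMap.smul_apply, he, smul_eq_mul,
    mul_ite, mul_zero, Finset.sum_ite_eq', Finset.mem_univ, if_true]
  exact Finset.sum_congr rfl fun i _ => by split_ifs <;> ring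

theorem IsLorentzBasis.eq_zero_of_apply_self_eq_zero (he : IsLorentzBasis ip e t) {x : Λ}
    (hxx : ip x x = 0) (hxt : e.repr x t = 0) : x = 0 := by
  rw [he.apply_eq_sum] at hxx
  have hsq : ∀ i, (if i = t then -1 else 1) * (e.repr x i * e.repr x i) = e.repr x i ^ 2 := by
    intro i
    split_ifs with hi
    · simp [hi, hxt]
    · ring
  simp only [hsq] at hxx
  have hzero := (Finset.sum_eq_zero_iff_of_nonneg fun i _ => sq_nonneg (e.repr x i)).mp hxx
  exact e.repr.injective (Finsupp.ext fun i => by simpa using hzero i (Finset.mem_univ i))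

theorem IsLorentzBasis.exists_smul_eq (he : IsLorentzBasis ip e t) {v w : Λ}
    (hv : v ≠ 0) (hvv : ip v v = 0) (hww : ip w w = 0) (hvw : ip v w = 0) :
    ∃ r : ℝ, w = r • v := by
  have hwv : ip w v = 0 := by
    rw [he.apply_eq_sum] at hvw ⊢
    simpa only [mul_comm (e.repr w _)] using hvw
  have hvt : e.repr v t ≠ 0 := fun h => hv (he.eq_zero_of_apply_self_eq_zero hvv h)
  -- `u` is a null vector with vanishing time coordinate
  set u := e.repr w t • v - e.repr v t • w with hu
  have hu0 : u = 0 := by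
    refine he.eq_zero_of_apply_self_eq_zero ?_ ?_
    · simp [hu, hvv, hww, hvw, hwv]
    · simp [hu, mul_comm]
  refine ⟨e.repr w t / e.repr v t, ?_⟩
  rw [hu, sub_eq_zero] at hu0
  rw [div_eq_inv_mul, mul_smul, hu0, smul_smul, inv_mul_cancel₀ hvt, one_smul]

end LorentzBasis

section HyperbolicPair

variable {Λ : Type*} [AddCommGroup Λ] [Module ℝ Λ] {ip : LinearMap.BilinForm ℝ Λ} {v w : Λ}

theorem linearIndependent_pair_of_apply_self_eq_zero (hvv : ip v v = 0) (hvw : ip v w ≠ 0) :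
    LinearIndependent ℝ ![v, w] := by
  rw [LinearIndependent.pair_iff]
  intro s t hst
  have ht : t = 0 := by
    have h := congrArg (ip v) hst
    simp only [map_add, map_smul, smul_eq_mul, hvv, mul_zero, zero_add, map_zero] at h
    exact (mul_eq_zero.mp h).resolve_right hvw
  refine ⟨?_, ht⟩
  rw [ht, zero_smul, add_zero] at hst
  exact (smul_eq_zero.mp hst).resolve_right (fun h => hvw (by simp [h]))

theorem exists_orthonormal_pair_spanning_null_pair (hsymm : ∀ x y, ip x y = ip y x)
    (hvv : ip v v = 0) (hww : ip w w = 0) (hvw : ip v w ≠ 0) :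
    ∃ a b : Λ, a ∈ Submodule.span ℝ {v, w} ∧ b ∈ Submodule.span ℝ {v, w} ∧
      ip a a = 1 ∧ ip b b = -1 ∧ ip a b = 0 ∧
      Submodule.span ℝ {a, b} = Submodule.span ℝ {v, w} := by
  set c := ip v w
  have hwv : ip w v = c := hsymm w v
  have hspan : Submodule.span ℝ {(2 * c)⁻¹ • v + w, (2 * c)⁻¹ • v - w} =
      Submodule.span ℝ {v, w} := by
    apply le_antisymm <;> rw [Submodule.span_le, Set.insert_subset_iff, Set.singleton_subset_iff]
      <;> simp only [SetLike.mem_coe, Submodule.mem_span_pair]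
    · exact ⟨⟨(2 * c)⁻¹, 1, by module⟩, ⟨(2 * c)⁻¹, -1, by module⟩⟩
    · refine ⟨⟨c, c, ?_⟩, ⟨2⁻¹, -2⁻¹, by module⟩⟩
      match_scalars <;> field_simp <;> ring
  refine ⟨(2 * c)⁻¹ • v + w, (2 * c)⁻¹ • v - w, hspan ▸ Submodule.subset_span (by simp),
    hspan ▸ Submodule.subset_span (by simp), ?_, ?_, ?_, hspan⟩ <;>
  · simp only [map_add, map_sub, map_smul, LinearMap.add_apply, LinearMap.sub_apply,
      LinearMap.smul_apply, smul_eq_mul, hvv, hww, hwv]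
    field_simp
    ring

end HyperbolicPair

end LinearMap.BilinForm

open LinearMap.BilinForm

theorem stmt_6_general
    (n p : ℕ) (hn : 1 ≤ n) (hp : 2 ≤ p)
    {V : Type} [AddCommGroup V] [Module ℝ V]
    (hV : finrank ℝ V = 2 * n)
    (J : V →ₗ[ℝ] V)
    {Λ : Type} [AddCommGroup Λ] [Module ℝ Λ]
    (ip : LinearMap.BilinForm ℝ Λ) (hipsymm : ∀ ξ η, ip ξ η = ip η ξ)
    (e : Basis (Fin p) ℝ Λ)
    (he : ∀ i j, ip (e i) (e j) =
      if i = j then (if (i : ℕ) = 0 then (-1 : ℝ) else 1) else 0)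
    (g : LinearMap.BilinForm ℝ V)
    (hgpos : ∀ X : V, X ≠ 0 → 0 < g X X)
    (hgJ : ∀ X Y, g (J X) (J Y) = g X Y)
    (α : V →ₗ[ℝ] V →ₗ[ℝ] Λ)
    (w : Λ) (hww : ip w w = 0)
    (hαw : ∀ X Y, ip (α X Y) w = - g X Y)
    (bW : LinearMap.BilinForm ℝ (Λ × Λ))
    (hbW : ∀ ξ η, bW ξ η = ip ξ.1 η.1 - ip ξ.2 η.2)
    (β : V → V → Λ × Λ)
    (hβ : ∀ X Y, β X Y = (α X Y + α (J X) (J Y), α X (J Y) - α (J X) Y))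
    (Sβ : Submodule ℝ (Λ × Λ))
    (hSβ : Sβ = Submodule.span ℝ {z : Λ × Λ | ∃ X Y, z = β X Y})
    (v : Λ) (hv0 : v ≠ 0) (hvv : ip v v = 0)
    (hrad : Sβ ⊓ bW.orthogonal Sβ =
      Submodule.span ℝ {((v, 0) : Λ × Λ), ((0, v) : Λ × Λ)}) :
    LinearIndependent ℝ ![v, w] ∧
      (∃ a b : Λ, a ∈ Submodule.span ℝ {v, w} ∧ b ∈ Submodule.span ℝ {v, w} ∧
        ip a a = 1 ∧ ip b b = -1 ∧ ip a b = 0 ∧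
        Submodule.span ℝ {a, b} = Submodule.span ℝ {v, w}) ∧
      ip v w ≠ 0 := by
  have hLorentz : IsLorentzBasis ip e ⟨0, by omega⟩ := by
    simpa only [IsLorentzBasis, Fin.ext_iff] using he
  have hperp : ∀ X, ip (α X X + α (J X) (J X)) v = 0 := by
    have hv : ((v, 0) : Λ × Λ) ∈ Sβ ⊓ bW.orthogonal Sβ :=
      hrad ▸ Submodule.subset_span (by simp)
    intro X
    have h := mem_orthogonal_iff.mp hv.2 (β X X) (hSβ ▸ Submodule.subset_span ⟨X, X, rfl⟩)
    simpa [hbW, hβ] using h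
  have hvw : ip v w ≠ 0 := by
    intro hvw
    obtain ⟨r, rfl⟩ := hLorentz.exists_smul_eq hv0 hvv hww hvw
    have : Nontrivial V := Module.nontrivial_of_finrank_pos (R := ℝ) (by omega)
    obtain ⟨X, hX⟩ := exists_ne (0 : V)
    have h : ip (α X X + α (J X) (J X)) (r • v) = -g X X - g X X := by
      rw [map_add, LinearMap.add_apply, hαw, hαw, hgJ]
      ring
    rw [map_smul, hperp X, smul_zero] at h
    linarith [hgpos X hX]
  exact ⟨linearIndependent_pair_of_apply_self_eq_zero hvv hvw,
    exists_orthonormal_pair_spanning_null_pair hipsymm hvv hww hvw, hvw⟩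

/-- With v as in the degenerate situation, v and w are linearly independent and
L = span{v,w} is a Lorentzian plane; in particular ⟨v,w⟩ ≠ 0. -/
theorem stmt_6
    (n p : ℕ) (hn : 1 ≤ n) (hp : 2 ≤ p)
    {V : Type} [AddCommGroup V] [Module ℝ V] [FiniteDimensional ℝ V]
    (hV : finrank ℝ V = 2 * n)
    (J : V →ₗ[ℝ] V) (hJ : ∀ X, J (J X) = -X)
    {Λ : Type} [AddCommGroup Λ] [Module ℝ Λ] [FiniteDimensional ℝ Λ]
    (hΛ : finrank ℝ Λ = p)
    (ip : LinearMap.BilinForm ℝ Λ) (hipsymm : ∀ ξ η, ip ξ η = ip η ξ)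
    (e : Basis (Fin p) ℝ Λ)
    (he : ∀ i j, ip (e i) (e j) =
      if i = j then (if (i : ℕ) = 0 then (-1 : ℝ) else 1) else 0)
    (g : LinearMap.BilinForm ℝ V) (hgsymm : ∀ X Y, g X Y = g Y X)
    (hgpos : ∀ X : V, X ≠ 0 → 0 < g X X)
    (hgJ : ∀ X Y, g (J X) (J Y) = g X Y)
    (α : V →ₗ[ℝ] V →ₗ[ℝ] Λ) (hαsymm : ∀ X Y, α X Y = α Y X)
    (w : Λ) (hw0 : w ≠ 0) (hww : ip w w = 0)
    (hαw : ∀ X Y, ip (α X Y) w = - g X Y)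
    (bW : LinearMap.BilinForm ℝ (Λ × Λ))
    (hbW : ∀ ξ η, bW ξ η = ip ξ.1 η.1 - ip ξ.2 η.2)
    (β : V → V → Λ × Λ)
    (hβ : ∀ X Y, β X Y = (α X Y + α (J X) (J Y), α X (J Y) - α (J X) Y))
    (hflat : ∀ X Y Z T, bW (β X Y) (β Z T) = bW (β X T) (β Z Y))
    (Sβ : Submodule ℝ (Λ × Λ))
    (hSβ : Sβ = Submodule.span ℝ {z : Λ × Λ | ∃ X Y, z = β X Y})
    (U₀ : Submodule ℝ Λ)
    (hU₀ : U₀ = Submodule.map (LinearMap.fst ℝ Λ Λ) Sβ)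
    (v : Λ) (hvU₀ : v ∈ U₀) (hv0 : v ≠ 0) (hvv : ip v v = 0)
    (hrad : Sβ ⊓ bW.orthogonal Sβ =
      Submodule.span ℝ {((v, 0) : Λ × Λ), ((0, v) : Λ × Λ)}) :
    LinearIndependent ℝ ![v, w] ∧
      (∃ a b : Λ, a ∈ Submodule.span ℝ {v, w} ∧ b ∈ Submodule.span ℝ {v, w} ∧
        ip a a = 1 ∧ ip b b = -1 ∧ ip a b = 0 ∧
        Submodule.span ℝ {a, b} = Submodule.span ℝ {v, w}) ∧
      ip v w ≠ 0 :=
  stmt_6_general n p hn hp hV J ip hipsymm e he g hgpos hgJ α w hww hαw bW hbW β hβ Sβ hSβ v hv0 hvv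
    hrad
end

section
/- Let α : V × V → Λ be a symmetric bilinear map satisfying ⟨α(X,Y),w⟩ = −(X,Y) for all X,Y ∈ V, with associated bilinear map β flat, and suppose S(β) is degenerate with v ∈ U₀ light-like, ⟨v,w⟩ = −1, and S(β) ∩ S(β)^⊥ = span{(v,0),(0,v)}. Then β(X,Y) = β₁(X,Y) + 2((X,Y)v, (X,JY)v) for all X,Y ∈ V. -/
/-!
Both components of `β X Y` lie in `S(β)`, so the radical condition makes them orthogonal to
`v`, while the normalisation `⟨α, w⟩ = -(·,·)` and the `J`-invariance of `(·,·)` give their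
pairings with `w` as `-2 (X,Y)` and `-2 (X,JY)`. As `v, w` is a hyperbolic pair, these two
pairings determine the `L`-component of a vector.
-/

open Module

namespace LinearMap.BilinForm

variable {R M : Type*} [CommRing R] [AddCommGroup M] [Module R M]

theorem eq_sub_smul_sub_smul_of_isHyperbolicPair {B : LinearMap.BilinForm R M} (hB : B.IsSymm)
    {v w : M} (hvv : B v v = 0) (hww : B w w = 0) (hvw : B v w = -1) {ξ η : M}
    (hη : η ∈ B.orthogonal (Submodule.span R {v, w}))
    (hξη : ξ - η ∈ Submodule.span R {v, w}) :
    ξ = η - B ξ w • v - B ξ v • w := by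
  obtain ⟨a, b, hab⟩ := Submodule.mem_span_pair.mp hξη
  have hwv : B w v = -1 := by rw [← hB.eq v w]; exact hvw
  have hpair : ∀ u ∈ Submodule.span R {v, w}, B ξ u = a * B v u + b * B w u := by
    intro u hu
    have hηu : B η u = 0 := hB.eq_iff.mp (hη u hu)
    have := congrArg (B · u) hab
    simp only [map_add, map_smul, map_sub, LinearMap.add_apply, LinearMap.smul_apply,
      LinearMap.sub_apply, smul_eq_mul, hηu] at this
    linear_combination -this
  have ha := hpair w (Submodule.subset_span (by simp))
  have hb := hpair v (Submodule.subset_span (by simp))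
  rw [hvw, hww] at ha
  rw [hvv, hwv] at hb
  rw [ha, hb]
  linear_combination (norm := module) -hab

section ProductForm

variable {ip : LinearMap.BilinForm R M} {bW : LinearMap.BilinForm R (M × M)}
  {S : Submodule R (M × M)} {s : M × M} {v : M}

theorem apply_fst_eq_zero_of_inl_mem_orthogonal
    (hbW : ∀ ξ η, bW ξ η = ip ξ.1 η.1 - ip ξ.2 η.2) (hs : s ∈ S)
    (hv : ((v, 0) : M × M) ∈ bW.orthogonal S) :
    ip s.1 v = 0 := by
  simpa [hbW] using hv s hs

theorem apply_snd_eq_zero_of_inr_mem_orthogonal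
    (hbW : ∀ ξ η, bW ξ η = ip ξ.1 η.1 - ip ξ.2 η.2) (hs : s ∈ S)
    (hv : ((0, v) : M × M) ∈ bW.orthogonal S) :
    ip s.2 v = 0 := by
  simpa [hbW] using hv s hs

end ProductForm

section ComplexStructure

variable {V : Type*} [AddCommGroup V] [Module R V] {g : LinearMap.BilinForm R V}
  {J : V →ₗ[R] V} {ip : LinearMap.BilinForm R M} {α : V →ₗ[R] V →ₗ[R] M} {w : M}

theorem apply_left_eq_neg_apply_right_of_complexStructure (hJ : ∀ X, J (J X) = -X)
    (hgJ : ∀ X Y, g (J X) (J Y) = g X Y) (X Y : V) :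
    g (J X) Y = -g X (J Y) := by
  rw [← hgJ, hJ, map_neg, LinearMap.neg_apply]

theorem apply_add_apply_complexStructure (hgJ : ∀ X Y, g (J X) (J Y) = g X Y)
    (hαw : ∀ X Y, ip (α X Y) w = -g X Y) (X Y : V) :
    ip (α X Y + α (J X) (J Y)) w = -(2 * g X Y) := by
  rw [map_add, LinearMap.add_apply, hαw, hαw, hgJ]
  ring

theorem apply_sub_apply_complexStructure (hJ : ∀ X, J (J X) = -X)
    (hgJ : ∀ X Y, g (J X) (J Y) = g X Y) (hαw : ∀ X Y, ip (α X Y) w = -g X Y) (X Y : V) :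
    ip (α X (J Y) - α (J X) Y) w = -(2 * g X (J Y)) := by
  rw [map_sub, LinearMap.sub_apply, hαw, hαw,
    apply_left_eq_neg_apply_right_of_complexStructure hJ hgJ]
  ring

end ComplexStructure

end LinearMap.BilinForm

open LinearMap.BilinForm

theorem stmt_7_general
    {V : Type} [AddCommGroup V] [Module ℝ V]
    (J : V →ₗ[ℝ] V) (hJ : ∀ X, J (J X) = -X)
    {Λ : Type} [AddCommGroup Λ] [Module ℝ Λ]
    (ip : LinearMap.BilinForm ℝ Λ) (hipsymm : ∀ ξ η, ip ξ η = ip η ξ)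
    (g : LinearMap.BilinForm ℝ V)
    (hgJ : ∀ X Y, g (J X) (J Y) = g X Y)
    (α : V →ₗ[ℝ] V →ₗ[ℝ] Λ)
    (w : Λ) (hww : ip w w = 0)
    (hαw : ∀ X Y, ip (α X Y) w = - g X Y)
    (bW : LinearMap.BilinForm ℝ (Λ × Λ))
    (hbW : ∀ ξ η, bW ξ η = ip ξ.1 η.1 - ip ξ.2 η.2)
    (β : V → V → Λ × Λ)
    (hβ : ∀ X Y, β X Y = (α X Y + α (J X) (J Y), α X (J Y) - α (J X) Y))
    (Sβ : Submodule ℝ (Λ × Λ))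
    (hSβ : Sβ = Submodule.span ℝ {z : Λ × Λ | ∃ X Y, z = β X Y})
    (v : Λ) (hvv : ip v v = 0) (hvw : ip v w = -1)
    (hrad : Sβ ⊓ bW.orthogonal Sβ =
      Submodule.span ℝ {((v, 0) : Λ × Λ), ((0, v) : Λ × Λ)})
    (L : Submodule ℝ Λ) (hL : L = Submodule.span ℝ {v, w})
    (proj : Λ →ₗ[ℝ] Λ)
    (hproj₁ : ∀ ξ : Λ, proj ξ ∈ ip.orthogonal L)
    (hproj₂ : ∀ ξ : Λ, ξ - proj ξ ∈ L)
    (β₁ : V → V → Λ × Λ)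
    (hβ₁ : ∀ X Y, β₁ X Y = (proj (β X Y).1, proj (β X Y).2)) :
    ∀ X Y : V, β X Y = β₁ X Y + ((2 * g X Y) • v, (2 * g X (J Y)) • v) := by
  intro X Y
  have hβS : β X Y ∈ Sβ := hSβ ▸ Submodule.subset_span ⟨X, Y, rfl⟩
  have hradical : ∀ z ∈ Submodule.span ℝ {((v, 0) : Λ × Λ), ((0, v) : Λ × Λ)},
      z ∈ bW.orthogonal Sβ := fun z hz => (hrad ▸ hz : z ∈ Sβ ⊓ bW.orthogonal Sβ).2
  have hdecomp : ∀ ξ c, ip ξ v = 0 → ip ξ w = -c → ξ = proj ξ + c • v := by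
    intro ξ c hξv hξw
    have h := eq_sub_smul_sub_smul_of_isHyperbolicPair ⟨hipsymm⟩ hvv hww hvw
      (hL ▸ hproj₁ ξ) (hL ▸ hproj₂ ξ)
    rwa [hξv, hξw, zero_smul, sub_zero, neg_smul, sub_neg_eq_add] at h
  have hfst : ip (β X Y).1 w = -(2 * g X Y) := by
    rw [hβ]; exact apply_add_apply_complexStructure hgJ hαw X Y
  have hsnd : ip (β X Y).2 w = -(2 * g X (J Y)) := by
    rw [hβ]; exact apply_sub_apply_complexStructure hJ hgJ hαw X Y
  rw [hβ₁]
  exact Prod.ext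
    (hdecomp _ _ (apply_fst_eq_zero_of_inl_mem_orthogonal hbW hβS <|
      hradical _ (Submodule.subset_span (by simp))) hfst)
    (hdecomp _ _ (apply_snd_eq_zero_of_inr_mem_orthogonal hbW hβS <|
      hradical _ (Submodule.subset_span (by simp))) hsnd)

/-- The decomposition β(X,Y) = β₁(X,Y) + 2((X,Y)v, (X,JY)v), where β₁ is the
component of β in L^⊥ ⊕ L^⊥ with L = span{v,w}. -/
theorem stmt_7
    (n p : ℕ) (hn : 1 ≤ n) (hp : 2 ≤ p)
    {V : Type} [AddCommGroup V] [Module ℝ V] [FiniteDimensional ℝ V]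
    (hV : finrank ℝ V = 2 * n)
    (J : V →ₗ[ℝ] V) (hJ : ∀ X, J (J X) = -X)
    {Λ : Type} [AddCommGroup Λ] [Module ℝ Λ] [FiniteDimensional ℝ Λ]
    (hΛ : finrank ℝ Λ = p)
    (ip : LinearMap.BilinForm ℝ Λ) (hipsymm : ∀ ξ η, ip ξ η = ip η ξ)
    (e : Basis (Fin p) ℝ Λ)
    (he : ∀ i j, ip (e i) (e j) =
      if i = j then (if (i : ℕ) = 0 then (-1 : ℝ) else 1) else 0)
    (g : LinearMap.BilinForm ℝ V) (hgsymm : ∀ X Y, g X Y = g Y X)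
    (hgpos : ∀ X : V, X ≠ 0 → 0 < g X X)
    (hgJ : ∀ X Y, g (J X) (J Y) = g X Y)
    (α : V →ₗ[ℝ] V →ₗ[ℝ] Λ) (hαsymm : ∀ X Y, α X Y = α Y X)
    (w : Λ) (hw0 : w ≠ 0) (hww : ip w w = 0)
    (hαw : ∀ X Y, ip (α X Y) w = - g X Y)
    (bW : LinearMap.BilinForm ℝ (Λ × Λ))
    (hbW : ∀ ξ η, bW ξ η = ip ξ.1 η.1 - ip ξ.2 η.2)
    (β : V → V → Λ × Λ)
    (hβ : ∀ X Y, β X Y = (α X Y + α (J X) (J Y), α X (J Y) - α (J X) Y))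
    (hflat : ∀ X Y Z T, bW (β X Y) (β Z T) = bW (β X T) (β Z Y))
    (Sβ : Submodule ℝ (Λ × Λ))
    (hSβ : Sβ = Submodule.span ℝ {z : Λ × Λ | ∃ X Y, z = β X Y})
    (U₀ : Submodule ℝ Λ)
    (hU₀ : U₀ = Submodule.map (LinearMap.fst ℝ Λ Λ) Sβ)
    (v : Λ) (hvU₀ : v ∈ U₀) (hv0 : v ≠ 0) (hvv : ip v v = 0) (hvw : ip v w = -1)
    (hrad : Sβ ⊓ bW.orthogonal Sβ =
      Submodule.span ℝ {((v, 0) : Λ × Λ), ((0, v) : Λ × Λ)})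
    (L : Submodule ℝ Λ) (hL : L = Submodule.span ℝ {v, w})
    (proj : Λ →ₗ[ℝ] Λ)
    (hproj₁ : ∀ ξ : Λ, proj ξ ∈ ip.orthogonal L)
    (hproj₂ : ∀ ξ : Λ, ξ - proj ξ ∈ L)
    (β₁ : V → V → Λ × Λ)
    (hβ₁ : ∀ X Y, β₁ X Y = (proj (β X Y).1, proj (β X Y).2)) :
    ∀ X Y : V, β X Y = β₁ X Y + ((2 * g X Y) • v, (2 * g X (J Y)) • v) :=
  stmt_7_general J hJ ip hipsymm g hgJ α w hww hαw bW hbW β hβ Sβ hSβ v hvv hvw hrad L hL proj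
    hproj₁ hproj₂ β₁ hβ₁
end

section
/- Let α : V × V → Λ be a symmetric bilinear map satisfying ⟨α(X,Y),w⟩ = −(X,Y) for all X,Y ∈ V, with associated bilinear map β flat, and suppose S(β) is degenerate with v ∈ U₀ light-like, ⟨v,w⟩ = −1, and S(β) ∩ S(β)^⊥ = span{(v,0),(0,v)}. Then the bilinear map β₁ is flat, i.e. ⟨⟨β₁(X,Y),β₁(Z,T)⟩⟩ = ⟨⟨β₁(X,T),β₁(Z,Y)⟩⟩ for all X,Y,Z,T ∈ V. -/
open Module

/-- The bilinear map β₁ is flat. -/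
theorem stmt_8
    (n p : ℕ) (hn : 1 ≤ n) (hp : 2 ≤ p)
    {V : Type} [AddCommGroup V] [Module ℝ V] [FiniteDimensional ℝ V]
    (hV : finrank ℝ V = 2 * n)
    (J : V →ₗ[ℝ] V) (hJ : ∀ X, J (J X) = -X)
    {Λ : Type} [AddCommGroup Λ] [Module ℝ Λ] [FiniteDimensional ℝ Λ]
    (hΛ : finrank ℝ Λ = p)
    (ip : LinearMap.BilinForm ℝ Λ) (hipsymm : ∀ ξ η, ip ξ η = ip η ξ)
    (e : Basis (Fin p) ℝ Λ)
    (he : ∀ i j, ip (e i) (e j) =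
      if i = j then (if (i : ℕ) = 0 then (-1 : ℝ) else 1) else 0)
    (g : LinearMap.BilinForm ℝ V) (hgsymm : ∀ X Y, g X Y = g Y X)
    (hgpos : ∀ X : V, X ≠ 0 → 0 < g X X)
    (hgJ : ∀ X Y, g (J X) (J Y) = g X Y)
    (α : V →ₗ[ℝ] V →ₗ[ℝ] Λ) (hαsymm : ∀ X Y, α X Y = α Y X)
    (w : Λ) (hw0 : w ≠ 0) (hww : ip w w = 0)
    (hαw : ∀ X Y, ip (α X Y) w = - g X Y)
    (bW : LinearMap.BilinForm ℝ (Λ × Λ))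
    (hbW : ∀ ξ η, bW ξ η = ip ξ.1 η.1 - ip ξ.2 η.2)
    (β : V → V → Λ × Λ)
    (hβ : ∀ X Y, β X Y = (α X Y + α (J X) (J Y), α X (J Y) - α (J X) Y))
    (hflat : ∀ X Y Z T, bW (β X Y) (β Z T) = bW (β X T) (β Z Y))
    (Sβ : Submodule ℝ (Λ × Λ))
    (hSβ : Sβ = Submodule.span ℝ {z : Λ × Λ | ∃ X Y, z = β X Y})
    (U₀ : Submodule ℝ Λ)
    (hU₀ : U₀ = Submodule.map (LinearMap.fst ℝ Λ Λ) Sβ)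
    (v : Λ) (hvU₀ : v ∈ U₀) (hv0 : v ≠ 0) (hvv : ip v v = 0) (hvw : ip v w = -1)
    (hrad : Sβ ⊓ bW.orthogonal Sβ =
      Submodule.span ℝ {((v, 0) : Λ × Λ), ((0, v) : Λ × Λ)})
    (L : Submodule ℝ Λ) (hL : L = Submodule.span ℝ {v, w})
    (proj : Λ →ₗ[ℝ] Λ)
    (hproj₁ : ∀ ξ : Λ, proj ξ ∈ ip.orthogonal L)
    (hproj₂ : ∀ ξ : Λ, ξ - proj ξ ∈ L)
    (β₁ : V → V → Λ × Λ)
    (hβ₁ : ∀ X Y, β₁ X Y = (proj (β X Y).1, proj (β X Y).2)) :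
    ∀ X Y Z T : V, bW (β₁ X Y) (β₁ Z T) = bW (β₁ X T) (β₁ Z Y) := by
  -- v, w ∈ L
  have hvL : v ∈ L := by rw [hL]; exact Submodule.subset_span (by simp)
  have hwL : w ∈ L := by rw [hL]; exact Submodule.subset_span (by simp)
  -- components of β are ip-orthogonal to v
  have hbv : ∀ X Y : V, ip (β X Y).1 v = 0 ∧ ip (β X Y).2 v = 0 := by
    intro X Y
    have hmemS : β X Y ∈ Sβ := by
      rw [hSβ]; exact Submodule.subset_span ⟨X, Y, rfl⟩
    have h1 : ((v, 0) : Λ × Λ) ∈ Sβ ⊓ bW.orthogonal Sβ := by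
      rw [hrad]; exact Submodule.subset_span (by simp)
    have h2 : ((0, v) : Λ × Λ) ∈ Sβ ⊓ bW.orthogonal Sβ := by
      rw [hrad]; exact Submodule.subset_span (by simp)
    have e1 : bW (β X Y) ((v, 0) : Λ × Λ) = 0 := h1.2 _ hmemS
    have e2 : bW (β X Y) ((0, v) : Λ × Λ) = 0 := h2.2 _ hmemS
    rw [hbW] at e1 e2
    simp only [map_zero, LinearMap.zero_apply, sub_zero, zero_sub, neg_eq_zero] at e1 e2
    exact ⟨e1, e2⟩
  -- proj preserves the inner product on vectors orthogonal to v
  have key : ∀ ξ η : Λ, ip ξ v = 0 → ip η v = 0 →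
      ip (proj ξ) (proj η) = ip ξ η := by
    intro ξ η hξ hη
    have hpL : ∀ ζ : Λ, ip v (proj ζ) = 0 ∧ ip w (proj ζ) = 0 := fun ζ =>
      ⟨hproj₁ ζ v hvL, hproj₁ ζ w hwL⟩
    -- decompose ξ - proj ξ and η - proj η in span {v, w}
    obtain ⟨a, b, hab⟩ := Submodule.mem_span_pair.mp (by rw [← hL]; exact hproj₂ ξ)
    obtain ⟨c, d, hcd⟩ := Submodule.mem_span_pair.mp (by rw [← hL]; exact hproj₂ η)
    -- b = 0 since ip (ξ - proj ξ) v = 0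
    have hb : b = 0 := by
      have h0 : ip (ξ - proj ξ) v = 0 := by
        rw [map_sub, LinearMap.sub_apply, hξ, hipsymm (proj ξ) v, (hpL ξ).1, sub_zero]
      rw [← hab] at h0
      simp only [map_add, map_smul, LinearMap.add_apply, LinearMap.smul_apply,
        smul_eq_mul, hvv, hipsymm w v, hvw] at h0
      linarith
    -- step 1: ip (proj ξ) (proj η) = ip (proj ξ) η
    have step1 : ip (proj ξ) (proj η) = ip (proj ξ) η := by
      have : ip (proj ξ) (η - proj η) = 0 := by
        rw [← hcd]
        simp only [map_add, map_smul, smul_eq_mul,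
          hipsymm (proj ξ) v, hipsymm (proj ξ) w, (hpL ξ).1, (hpL ξ).2]
        ring
      rw [map_sub] at this
      linarith [this]
    -- step 2: ip (proj ξ) η = ip ξ η
    have step2 : ip (proj ξ) η = ip ξ η := by
      have h0 : ip (ξ - proj ξ) η = 0 := by
        rw [← hab, hb]
        simp only [map_add, map_smul, LinearMap.add_apply, LinearMap.smul_apply,
          smul_eq_mul, zero_smul, add_zero]
        rw [hipsymm v η, hη]; ring
      rw [map_sub, LinearMap.sub_apply] at h0
      linarith
    rw [step1, step2]
  intro X Y Z T
  have conv : ∀ A B C D : V, bW (β₁ A B) (β₁ C D) = bW (β A B) (β C D) := by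
    intro A B C D
    rw [hβ₁, hβ₁, hbW, hbW]
    rw [key _ _ (hbv A B).1 (hbv C D).1, key _ _ (hbv A B).2 (hbv C D).2]
  rw [conv, conv, hflat]
end

section
/- Let β₁ : V × V → U ⊕ U be a flat bilinear map satisfying the symmetry property that β₁(Y,Z) = (ξ,η) implies β₁(Z,Y) = (ξ,−η). If X is a regular element of β₁, then ker B_X = N(β₁), i.e. β₁(Y,Z) = 0 for all Y ∈ V whenever β₁(X,Z) = 0; consequently dim N(β₁) ≥ dim V − 2 dim U. -/
/-!
Let `Z ∈ ker B_X`. Regularity of `X` forces `β₁(Z,Z) ∈ B_X(V)`: otherwise, for small `t ≠ 0`,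
`B_{X+tZ}(V)` contains a perturbation of a basis of `B_X(V)` together with
`B_{X+tZ}(Z/t) = β₁(Z,Z)`, and so has larger dimension. Flatness with `β₁(X,Z) = 0` makes
`B_X(V)` orthogonal to every `β₁(Y,Z)`, so `β₁(Z,Z)` is isotropic. By the symmetry,
`⟨⟨β₁(Y,Z), β₁(Z,Y)⟩⟩ = |ξ|² + |η|²` for `β₁(Y,Z) = (ξ,η)`; applied with `Y = Z` this gives
`β₁(Z,Z) = 0`, and then flatness gives `⟨⟨β₁(Y,Z), β₁(Z,Y)⟩⟩ = ⟨⟨β₁(Y,Y), β₁(Z,Z)⟩⟩ = 0`,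
i.e. `β₁(Y,Z) = 0`. The dimension bound is rank–nullity for `B_X`.
-/

open Module Submodule LinearMap Filter Topology

theorem LinearIndependent.exists_ne_zero_add_smul {ι W : Type*} [Finite ι]
    [AddCommGroup W] [Module ℝ W] [FiniteDimensional ℝ W] {v : ι → W}
    (hv : LinearIndependent ℝ v) (w : ι → W) :
    ∃ t : ℝ, t ≠ 0 ∧ LinearIndependent ℝ (v + t • w) := by
  let κ := (Module.finBasis ℝ W).equivFun
  have hcont : Continuous fun t : ℝ => κ ∘ (v + t • w) := by
    refine continuous_pi fun i => ?_
    simp only [Function.comp_apply, Pi.add_apply, Pi.smul_apply, map_add, map_smul]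
    fun_prop
  have hnear : ∀ᶠ t in 𝓝[≠] (0 : ℝ), LinearIndependent ℝ (κ ∘ (v + t • w)) := by
    refine Eventually.filter_mono nhdsWithin_le_nhds ?_
    exact (hcont.tendsto' 0 (κ ∘ v) (by simp)).eventually
      (hv.map' κ.toLinearMap κ.ker).eventually
  obtain ⟨t, hli, ht⟩ := (hnear.and self_mem_nhdsWithin).exists
  exact ⟨t, ht, hli.of_comp κ.toLinearMap⟩

theorem LinearMap.mem_range_of_finrank_range_add_smul_le {V W : Type*}
    [AddCommGroup V] [Module ℝ V] [AddCommGroup W] [Module ℝ W] [FiniteDimensional ℝ W]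
    {A B : V →ₗ[ℝ] W} {z : V} (hz : A z = 0)
    (hmax : ∀ t : ℝ, finrank ℝ (range (A + t • B)) ≤ finrank ℝ (range A)) :
    B z ∈ range A := by
  by_contra hBz
  set r := finrank ℝ (range A)
  let v := Module.finBasis ℝ (range A)
  choose e he using fun i => (v i).2
  have hAe : LinearIndependent ℝ (A ∘ e) := by
    have : A ∘ e = (range A).subtype ∘ v := funext he
    exact this ▸ v.linearIndependent.map' _ (ker_subtype _)
  have hspan : span ℝ (Set.range (A ∘ e)) ≤ range A :=
    span_le.2 <| Set.range_subset_iff.2 fun i => mem_range_self A (e i)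
  let u : Fin (r + 1) → W := Fin.snoc (A ∘ e) (B z)
  let d : Fin (r + 1) → W := Fin.snoc (B ∘ e) 0
  have hli : LinearIndependent ℝ u := linearIndependent_finSnoc.2 ⟨hAe, fun h => hBz (hspan h)⟩
  obtain ⟨t, ht, hli'⟩ := hli.exists_ne_zero_add_smul d
  have hsub : Set.range (u + t • d) ⊆ range (A + t • B) := by
    refine Set.range_subset_iff.2 fun i => Fin.lastCases ?_ (fun j => ?_) i
    · refine ⟨t⁻¹ • z, ?_⟩
      simp [u, d, hz, smul_smul, ht]
    · exact ⟨e j, by simp [u, d]⟩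
  have hcard := (finrank_span_eq_card hli').symm.trans_le (finrank_mono (span_le.2 hsub))
  have hle := hmax t
  simp only [Fintype.card_fin] at hcard
  omega

section Flat

variable {V U : Type*} [AddCommGroup V] [Module ℝ V] [AddCommGroup U] [Module ℝ U]
  {b : LinearMap.BilinForm ℝ U} {bW : LinearMap.BilinForm ℝ (U × U)}
  {β : V →ₗ[ℝ] V →ₗ[ℝ] U × U}

theorem apply_eq_zero_of_bW_apply_swap_eq_zero (hbpos : ∀ ξ : U, ξ ≠ 0 → 0 < b ξ ξ)
    (hbW : ∀ ξ η, bW ξ η = b ξ.1 η.1 - b ξ.2 η.2)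
    (hsym : ∀ (Y Z : V) (ξ η : U), β Y Z = (ξ, η) → β Z Y = (ξ, -η)) {Y Z : V}
    (h : bW (β Y Z) (β Z Y) = 0) : β Y Z = 0 := by
  have hswap : β Z Y = ((β Y Z).1, -(β Y Z).2) := hsym Y Z _ _ rfl
  rw [hswap, hbW] at h
  simp only [map_neg, sub_neg_eq_add] at h
  have hnonneg : ∀ ζ : U, 0 ≤ b ζ ζ := fun ζ => by
    rcases eq_or_ne ζ 0 with rfl | hζ
    · simp
    · exact (hbpos ζ hζ).le
  have hzero : ∀ ζ : U, b ζ ζ ≤ 0 → ζ = 0 := fun ζ hζ => by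
    by_contra hne
    exact (hbpos ζ hne).not_ge hζ
  exact Prod.ext (hzero _ (by linarith [hnonneg (β Y Z).2]))
    (hzero _ (by linarith [hnonneg (β Y Z).1]))

theorem apply_eq_zero_of_mem_range_of_apply_eq_zero (hbpos : ∀ ξ : U, ξ ≠ 0 → 0 < b ξ ξ)
    (hbW : ∀ ξ η, bW ξ η = b ξ.1 η.1 - b ξ.2 η.2)
    (hflat : ∀ X Y Z T, bW (β X Y) (β Z T) = bW (β X T) (β Z Y))
    (hsym : ∀ (Y Z : V) (ξ η : U), β Y Z = (ξ, η) → β Z Y = (ξ, -η)) {X Z : V}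
    (hXZ : β X Z = 0) (hZZ : β Z Z ∈ range (β X)) (Y : V) : β Y Z = 0 := by
  obtain ⟨T, hT⟩ := hZZ
  have hZZ0 : β Z Z = 0 := by
    refine apply_eq_zero_of_bW_apply_swap_eq_zero hbpos hbW hsym ?_
    conv_lhs => arg 1; rw [← hT]
    rw [hflat, hXZ, map_zero, LinearMap.zero_apply]
  refine apply_eq_zero_of_bW_apply_swap_eq_zero hbpos hbW hsym ?_
  rw [hflat, hZZ0, map_zero]

end Flat

theorem stmt_9_general
    {V : Type} [AddCommGroup V] [Module ℝ V] [FiniteDimensional ℝ V]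
    {U : Type} [AddCommGroup U] [Module ℝ U] [FiniteDimensional ℝ U]
    (b : LinearMap.BilinForm ℝ U)
    (hbpos : ∀ ξ : U, ξ ≠ 0 → 0 < b ξ ξ)
    (bW : LinearMap.BilinForm ℝ (U × U))
    (hbW : ∀ ξ η, bW ξ η = b ξ.1 η.1 - b ξ.2 η.2)
    (β₁ : V →ₗ[ℝ] V →ₗ[ℝ] U × U)
    (hflat : ∀ X Y Z T, bW (β₁ X Y) (β₁ Z T) = bW (β₁ X T) (β₁ Z Y))
    (hsym : ∀ (Y Z : V) (ξ η : U), β₁ Y Z = (ξ, η) → β₁ Z Y = (ξ, -η))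
    (X : V)
    (hreg : ∀ Z : V,
      finrank ℝ (LinearMap.range (β₁ Z)) ≤ finrank ℝ (LinearMap.range (β₁ X))) :
    LinearMap.ker (β₁ X) = (⨅ Y : V, LinearMap.ker (β₁ Y)) ∧
      finrank ℝ V - 2 * finrank ℝ U ≤
        finrank ℝ ((⨅ Y : V, LinearMap.ker (β₁ Y)) : Submodule ℝ V) := by
  have hker : ker (β₁ X) = ⨅ Y : V, ker (β₁ Y) := by
    refine le_antisymm (le_iInf fun Y Z hZ => ?_) (iInf_le _ X)
    have hZZ : β₁ Z Z ∈ range (β₁ X) :=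
      mem_range_of_finrank_range_add_smul_le hZ fun t => by
        rw [← map_smul, ← map_add]; exact hreg _
    exact apply_eq_zero_of_mem_range_of_apply_eq_zero hbpos hbW hflat hsym hZ hZZ Y
  refine ⟨hker, ?_⟩
  have hrank := finrank_range_add_finrank_ker (β₁ X)
  have hrange : finrank ℝ (range (β₁ X)) ≤ finrank ℝ U + finrank ℝ U :=
    (finrank_le _).trans_eq finrank_prod
  rw [← hker]
  omega

/-- For a flat β₁ into U ⊕ U (U positive definite) with the symmetry
β₁(Y,Z)=(ξ,η) ⟹ β₁(Z,Y)=(ξ,−η), the kernel of B_X at a regular element X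
equals N(β₁); consequently dim N(β₁) ≥ dim V − 2 dim U. -/
theorem stmt_9
    {V : Type} [AddCommGroup V] [Module ℝ V] [FiniteDimensional ℝ V]
    {U : Type} [AddCommGroup U] [Module ℝ U] [FiniteDimensional ℝ U]
    (b : LinearMap.BilinForm ℝ U) (hbsymm : ∀ ξ η, b ξ η = b η ξ)
    (hbpos : ∀ ξ : U, ξ ≠ 0 → 0 < b ξ ξ)
    (bW : LinearMap.BilinForm ℝ (U × U))
    (hbW : ∀ ξ η, bW ξ η = b ξ.1 η.1 - b ξ.2 η.2)
    (β₁ : V →ₗ[ℝ] V →ₗ[ℝ] U × U)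
    (hflat : ∀ X Y Z T, bW (β₁ X Y) (β₁ Z T) = bW (β₁ X T) (β₁ Z Y))
    (hsym : ∀ (Y Z : V) (ξ η : U), β₁ Y Z = (ξ, η) → β₁ Z Y = (ξ, -η))
    (X : V)
    (hreg : ∀ Z : V,
      finrank ℝ (LinearMap.range (β₁ Z)) ≤ finrank ℝ (LinearMap.range (β₁ X))) :
    LinearMap.ker (β₁ X) = (⨅ Y : V, LinearMap.ker (β₁ Y)) ∧
      finrank ℝ V - 2 * finrank ℝ U ≤
        finrank ℝ ((⨅ Y : V, LinearMap.ker (β₁ Y)) : Submodule ℝ V) :=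
  stmt_9_general b hbpos bW hbW β₁ hflat hsym X hreg
end

section
/- Let α : V × V → Λ be a symmetric bilinear map satisfying ⟨α(X,Y),w⟩ = −(X,Y) for all X,Y ∈ V, with associated bilinear map β flat, and suppose S(β) is degenerate with v ∈ U₀ light-like, ⟨v,w⟩ = −1, and S(β) ∩ S(β)^⊥ = span{(v,0),(0,v)}. If s ≤ n, then dim N(β₁) ≥ 2n − 2s + 2, where N(β₁) = {Z ∈ V : β₁(Y,Z) = 0 for all Y ∈ V}. -/
open Module

set_option maxHeartbeats 4000000

/-- If s ≤ n then dim N(β₁) ≥ 2n − 2s + 2. -/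
theorem stmt_10
    (n p : ℕ) (hn : 1 ≤ n) (hp : 2 ≤ p)
    {V : Type} [AddCommGroup V] [Module ℝ V] [FiniteDimensional ℝ V]
    (hV : finrank ℝ V = 2 * n)
    (J : V →ₗ[ℝ] V) (hJ : ∀ X, J (J X) = -X)
    {Λ : Type} [AddCommGroup Λ] [Module ℝ Λ] [FiniteDimensional ℝ Λ]
    (hΛ : finrank ℝ Λ = p)
    (ip : LinearMap.BilinForm ℝ Λ) (hipsymm : ∀ ξ η, ip ξ η = ip η ξ)
    (e : Basis (Fin p) ℝ Λ)
    (he : ∀ i j, ip (e i) (e j) =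
      if i = j then (if (i : ℕ) = 0 then (-1 : ℝ) else 1) else 0)
    (g : LinearMap.BilinForm ℝ V) (hgsymm : ∀ X Y, g X Y = g Y X)
    (hgpos : ∀ X : V, X ≠ 0 → 0 < g X X)
    (hgJ : ∀ X Y, g (J X) (J Y) = g X Y)
    (α : V →ₗ[ℝ] V →ₗ[ℝ] Λ) (hαsymm : ∀ X Y, α X Y = α Y X)
    (w : Λ) (hw0 : w ≠ 0) (hww : ip w w = 0)
    (hαw : ∀ X Y, ip (α X Y) w = - g X Y)
    (bW : LinearMap.BilinForm ℝ (Λ × Λ))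
    (hbW : ∀ ξ η, bW ξ η = ip ξ.1 η.1 - ip ξ.2 η.2)
    (β : V → V → Λ × Λ)
    (hβ : ∀ X Y, β X Y = (α X Y + α (J X) (J Y), α X (J Y) - α (J X) Y))
    (hflat : ∀ X Y Z T, bW (β X Y) (β Z T) = bW (β X T) (β Z Y))
    (Sβ : Submodule ℝ (Λ × Λ))
    (hSβ : Sβ = Submodule.span ℝ {z : Λ × Λ | ∃ X Y, z = β X Y})
    (U₀ : Submodule ℝ Λ)
    (hU₀ : U₀ = Submodule.map (LinearMap.fst ℝ Λ Λ) Sβ)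
    (s : ℕ) (hs : s = finrank ℝ U₀) (hsn : s ≤ n)
    (v : Λ) (hvU₀ : v ∈ U₀) (hv0 : v ≠ 0) (hvv : ip v v = 0) (hvw : ip v w = -1)
    (hrad : Sβ ⊓ bW.orthogonal Sβ =
      Submodule.span ℝ {((v, 0) : Λ × Λ), ((0, v) : Λ × Λ)})
    (L : Submodule ℝ Λ) (hL : L = Submodule.span ℝ {v, w})
    (proj : Λ →ₗ[ℝ] Λ)
    (hproj₁ : ∀ ξ : Λ, proj ξ ∈ ip.orthogonal L)
    (hproj₂ : ∀ ξ : Λ, ξ - proj ξ ∈ L)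
    (β₁ : V → V → Λ × Λ)
    (hβ₁ : ∀ X Y, β₁ X Y = (proj (β X Y).1, proj (β X Y).2)) :
    2 * n - 2 * s + 2 ≤
      finrank ℝ (Submodule.span ℝ {Z : V | ∀ Y, β₁ Y Z = 0}) := by
  classical
  have hp0 : 0 < p := by omega
  set i0 : Fin p := ⟨0, hp0⟩ with hi0
  have hwv : ip w v = -1 := by rw [hipsymm]; exact hvw
  -- coordinate expansion of `ip`
  have expand : ∀ x y : Λ, ip x y =
      ∑ i : Fin p, e.repr x i * e.repr y i * (if (i : ℕ) = 0 then (-1 : ℝ) else 1) := by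
    intro x y
    have h1 : ip x y = ∑ i : Fin p, e.repr x i * ip (e i) y := by
      conv_lhs => rw [← e.sum_repr x]
      rw [map_sum, LinearMap.sum_apply]
      exact Finset.sum_congr rfl fun i _ => by
        rw [map_smul, LinearMap.smul_apply, smul_eq_mul]
    have h2 : ∀ i : Fin p, ip (e i) y = e.repr y i * (if (i : ℕ) = 0 then (-1 : ℝ) else 1) := by
      intro i
      conv_lhs => rw [← e.sum_repr y]
      rw [map_sum, Finset.sum_eq_single i]
      · rw [map_smul, smul_eq_mul, he i i, if_pos rfl]
      · intro j _ hj
        rw [map_smul, smul_eq_mul, he i j, if_neg (fun h => hj h.symm), mul_zero]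
      · intro h; exact absurd (Finset.mem_univ i) h
    rw [h1]
    exact Finset.sum_congr rfl fun i _ => by rw [h2 i, mul_assoc]
  have coord : ∀ x y : Λ, ip x y = -(e.repr x i0 * e.repr y i0) +
      ∑ i ∈ Finset.univ.erase i0, e.repr x i * e.repr y i := by
    intro x y
    rw [expand x y, ← Finset.add_sum_erase Finset.univ _ (Finset.mem_univ i0)]
    congr 1
    · have hc : (if ((i0 : Fin p) : ℕ) = 0 then (-1 : ℝ) else 1) = -1 := if_pos (by rw [hi0])
      rw [hc]; ring
    · refine Finset.sum_congr rfl fun i hi => ?_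
      have hne : ¬((i : ℕ) = 0) := by
        intro h
        exact (Finset.mem_erase.mp hi).1 (Fin.ext (by rw [h, hi0]))
      rw [if_neg hne, mul_one]
  -- positivity of ip on the orthogonal complement of L
  have posdef : ∀ x : Λ, ip v x = 0 → ip w x = 0 →
      0 ≤ ip x x ∧ (ip x x = 0 → x = 0) := by
    intro x hv1 hw1
    have hτx : ip (v + w) x = 0 := by
      rw [map_add, LinearMap.add_apply, hv1, hw1, add_zero]
    have hττ : ip (v + w) (v + w) = -2 := by
      simp only [map_add, LinearMap.add_apply, hvv, hvw, hwv, hww]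
      norm_num
    have cττ := coord (v + w) (v + w)
    have cτx := coord (v + w) x
    have cxx := coord x x
    rw [hττ] at cττ
    rw [hτx] at cτx
    have hSttnn : (0:ℝ) ≤ ∑ i ∈ Finset.univ.erase i0, e.repr (v+w) i * e.repr (v+w) i :=
      Finset.sum_nonneg fun i _ => mul_self_nonneg _
    have hSxxnn : (0:ℝ) ≤ ∑ i ∈ Finset.univ.erase i0, e.repr x i * e.repr x i :=
      Finset.sum_nonneg fun i _ => mul_self_nonneg _
    have hCS : (∑ i ∈ Finset.univ.erase i0, e.repr (v+w) i * e.repr x i) *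
        (∑ i ∈ Finset.univ.erase i0, e.repr (v+w) i * e.repr x i) ≤
        (∑ i ∈ Finset.univ.erase i0, e.repr (v+w) i * e.repr (v+w) i) *
        (∑ i ∈ Finset.univ.erase i0, e.repr x i * e.repr x i) := by
      have h := Finset.sum_mul_sq_le_sq_mul_sq (Finset.univ.erase i0)
        (fun i => e.repr (v+w) i) (fun i => e.repr x i)
      simpa only [pow_two] using h
    obtain ⟨a, ha⟩ : ∃ t : ℝ, t = e.repr (v+w) i0 := ⟨_, rfl⟩
    obtain ⟨b, hb⟩ : ∃ t : ℝ, t = e.repr x i0 := ⟨_, rfl⟩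
    obtain ⟨T, hT⟩ : ∃ t : ℝ, t = ∑ i ∈ Finset.univ.erase i0, e.repr (v+w) i * e.repr (v+w) i :=
      ⟨_, rfl⟩
    obtain ⟨S, hS⟩ : ∃ t : ℝ, t = ∑ i ∈ Finset.univ.erase i0, e.repr (v+w) i * e.repr x i :=
      ⟨_, rfl⟩
    obtain ⟨X, hX⟩ : ∃ t : ℝ, t = ∑ i ∈ Finset.univ.erase i0, e.repr x i * e.repr x i :=
      ⟨_, rfl⟩
    rw [← ha, ← hT] at cττ
    rw [← ha, ← hb, ← hS] at cτx
    rw [← hb, ← hX] at cxx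
    rw [← hT] at hSttnn
    rw [← hX] at hSxxnn
    rw [← hS, ← hT, ← hX] at hCS
    have ha2 : (2:ℝ) ≤ a * a := by linarith
    have hS' : S = a * b := by linarith
    have hT' : T = a * a - 2 := by linarith
    rw [hS', hT'] at hCS
    constructor
    · rw [cxx]
      nlinarith [hCS, hSxxnn, ha2, mul_self_nonneg b]
    · intro hx0
      rw [cxx] at hx0
      have hb2 : b * b ≤ 0 := by nlinarith [hCS, hx0, ha2]
      have hb0 : b = 0 := by nlinarith [mul_self_nonneg b, hb2]
      have hX0 : X = 0 := by rw [hb0] at hx0; linarith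
      have hSxx0 : (∑ i ∈ Finset.univ.erase i0, e.repr x i * e.repr x i) = 0 := hX ▸ hX0
      have hall : ∀ i : Fin p, e.repr x i = 0 := by
        intro i
        by_cases hi : i = i0
        · rw [hi, ← hb]; exact hb0
        · have hmem : i ∈ Finset.univ.erase i0 := Finset.mem_erase.mpr ⟨hi, Finset.mem_univ i⟩
          have h := (Finset.sum_eq_zero_iff_of_nonneg
            (fun j _ => mul_self_nonneg (e.repr x j))).mp hSxx0 i hmem
          exact mul_self_eq_zero.mp h
      have : x = ∑ i : Fin p, e.repr x i • e i := (e.sum_repr x).symm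
      rw [this]
      exact Finset.sum_eq_zero fun i _ => by rw [hall i, zero_smul]
  -- memberships
  have hvL : v ∈ L := by rw [hL]; exact Submodule.subset_span (Set.mem_insert _ _)
  have hwL : w ∈ L := by
    rw [hL]; exact Submodule.subset_span (Set.mem_insert_iff.mpr (Or.inr rfl))
  have hprojv : ∀ ξ : Λ, ip v (proj ξ) = 0 := fun ξ => hproj₁ ξ v hvL
  have hprojw : ∀ ξ : Λ, ip w (proj ξ) = 0 := fun ξ => hproj₁ ξ w hwL
  have βmem : ∀ X Y, β X Y ∈ Sβ := by
    intro X Y; rw [hSβ]; exact Submodule.subset_span ⟨X, Y, rfl⟩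
  have hbW' : ∀ a b c d : Λ, bW (a, b) (c, d) = ip a c - ip b d := fun a b c d => hbW (a,b) (c,d)
  have hv0orth : ((v, (0:Λ)) : Λ × Λ) ∈ bW.orthogonal Sβ := by
    have h1 : ((v, (0:Λ)) : Λ × Λ) ∈ Sβ ⊓ bW.orthogonal Sβ := by
      rw [hrad]; exact Submodule.subset_span (Set.mem_insert _ _)
    exact h1.2
  have h0vorth : (((0:Λ), v) : Λ × Λ) ∈ bW.orthogonal Sβ := by
    have h1 : (((0:Λ), v) : Λ × Λ) ∈ Sβ ⊓ bW.orthogonal Sβ := by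
      rw [hrad]; exact Submodule.subset_span (Set.mem_insert_iff.mpr (Or.inr rfl))
    exact h1.2
  have hva : ∀ X Y, ip v (β X Y).1 = 0 := by
    intro X Y
    have h2 : bW (β X Y) (v, 0) = 0 := hv0orth (β X Y) (βmem X Y)
    rw [hbW] at h2
    rw [hipsymm]
    have h3 : ip (β X Y).2 (0:Λ) = 0 := map_zero _
    simp only [] at h2
    rw [h3, sub_zero] at h2
    exact h2
  have hvb : ∀ X Y, ip v (β X Y).2 = 0 := by
    intro X Y
    have h2 : bW (β X Y) (0, v) = 0 := h0vorth (β X Y) (βmem X Y)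
    rw [hbW] at h2
    rw [hipsymm]
    have h3 : ip (β X Y).1 (0:Λ) = 0 := map_zero _
    simp only [] at h2
    rw [h3, zero_sub, neg_eq_zero] at h2
    exact h2
  -- the projection does not change the inner products of components of β
  have ipproj : ∀ ξ η : Λ, ip v ξ = 0 → ip v η = 0 →
      ip (proj ξ) (proj η) = ip ξ η := by
    intro ξ η hξ hη
    have h1 : ip (proj ξ) (proj η) = ip (proj ξ) η := by
      have hmem : η - proj η ∈ L := hproj₂ η
      have h2 : ip (η - proj η) (proj ξ) = 0 := hproj₁ ξ _ hmem
      have h3 : ip (proj ξ) (η - proj η) = 0 := by rw [hipsymm]; exact h2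
      rw [map_sub] at h3
      linarith
    have h4 : ip (ξ - proj ξ) η = 0 := by
      have hmemL : ξ - proj ξ ∈ L := hproj₂ ξ
      rw [hL] at hmemL
      obtain ⟨la, lb, hd⟩ := Submodule.mem_span_pair.mp hmemL
      have h5 : ip v (ξ - proj ξ) = 0 := by
        rw [map_sub, hξ, hprojv, sub_zero]
      rw [← hd] at h5
      rw [map_add, map_smul, map_smul, smul_eq_mul, smul_eq_mul, hvv, hvw] at h5
      have hb0 : lb = 0 := by linarith
      rw [← hd, hb0, zero_smul, add_zero, map_smul, LinearMap.smul_apply, hη, smul_zero]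
    have h6 : ip (ξ - proj ξ) η = ip ξ η - ip (proj ξ) η := by
      rw [map_sub, LinearMap.sub_apply]
    linarith
  have bWtransfer : ∀ X Y Z T, bW (β₁ X Y) (β₁ Z T) = bW (β X Y) (β Z T) := by
    intro X Y Z T
    rw [hβ₁ X Y, hβ₁ Z T, hbW', hbW]
    rw [ipproj _ _ (hva X Y) (hva Z T), ipproj _ _ (hvb X Y) (hvb Z T)]
  -- structural identities
  have hβswap : ∀ X Y, β Y X = ((β X Y).1, -(β X Y).2) := by
    intro X Y
    rw [hβ X Y, hβ Y X]
    refine Prod.ext ?_ ?_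
    · show α Y X + α (J Y) (J X) = α X Y + α (J X) (J Y)
      rw [hαsymm Y X, hαsymm (J Y) (J X)]
    · show α Y (J X) - α (J Y) X = -(α X (J Y) - α (J X) Y)
      rw [hαsymm Y (J X), hαsymm (J Y) X, neg_sub]
  have hβ₁swap : ∀ X Y, β₁ Y X = ((β₁ X Y).1, -(β₁ X Y).2) := by
    intro X Y
    rw [hβ₁ Y X, hβ₁ X Y, hβswap X Y]
    refine Prod.ext ?_ ?_
    · rfl
    · show proj (-(β X Y).2) = -proj (β X Y).2
      rw [map_neg]
  have hJβ : ∀ X Y, β (J X) Y = (-(β X Y).2, (β X Y).1) := by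
    intro X Y
    rw [hβ (J X) Y, hβ X Y]
    refine Prod.ext ?_ ?_
    · show α (J X) Y + α (J (J X)) (J Y) = -(α X (J Y) - α (J X) Y)
      rw [hJ X, map_neg, LinearMap.neg_apply]
      abel
    · show α (J X) (J Y) - α (J (J X)) Y = α X Y + α (J X) (J Y)
      rw [hJ X, map_neg, LinearMap.neg_apply]
      abel
  have hdiag2 : ∀ Z, (β₁ Z Z).2 = 0 := by
    intro Z
    rw [hβ₁ Z Z]
    show proj (β Z Z).2 = 0
    rw [hβ Z Z]
    show proj (α Z (J Z) - α (J Z) Z) = 0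
    rw [hαsymm Z (J Z), sub_self, map_zero]
  -- the key identity : ‖β₁ Y Z‖² = ip (Q Y) (Q Z)
  have keyId : ∀ Y Z, ip (β₁ Y Z).1 (β₁ Y Z).1 + ip (β₁ Y Z).2 (β₁ Y Z).2
      = ip (β₁ Y Y).1 (β₁ Z Z).1 := by
    intro Y Z
    have h1 : bW (β₁ Y Z) (β₁ Z Y)
        = ip (β₁ Y Z).1 (β₁ Y Z).1 + ip (β₁ Y Z).2 (β₁ Y Z).2 := by
      rw [hβ₁swap Y Z, hbW]
      show ip (β₁ Y Z).1 (β₁ Y Z).1 - ip (β₁ Y Z).2 (-(β₁ Y Z).2) = _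
      rw [map_neg, sub_neg_eq_add]
    have h2 : bW (β₁ Y Z) (β₁ Z Y) = bW (β₁ Y Y) (β₁ Z Z) := by
      rw [bWtransfer, bWtransfer, hflat Y Z Z Y]
    have h3 : bW (β₁ Y Y) (β₁ Z Z) = ip (β₁ Y Y).1 (β₁ Z Z).1 := by
      rw [hbW, hdiag2 Z]
      have : ip (β₁ Y Y).2 (0:Λ) = 0 := map_zero _
      rw [this, sub_zero]
    rw [← h1, h2, h3]
  -- components of β₁ are orthogonal to v and w
  have hc1 : ∀ X Y, ip v (β₁ X Y).1 = 0 ∧ ip w (β₁ X Y).1 = 0 := by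
    intro X Y; rw [hβ₁ X Y]; exact ⟨hprojv _, hprojw _⟩
  have hc2 : ∀ X Y, ip v (β₁ X Y).2 = 0 ∧ ip w (β₁ X Y).2 = 0 := by
    intro X Y; rw [hβ₁ X Y]; exact ⟨hprojv _, hprojw _⟩
  have keyNonneg : ∀ Y Z, 0 ≤ ip (β₁ Y Y).1 (β₁ Z Z).1 := by
    intro Y Z
    rw [← keyId Y Z]
    have n1 := (posdef _ (hc1 Y Z).1 (hc1 Y Z).2).1
    have n2 := (posdef _ (hc2 Y Z).1 (hc2 Y Z).2).1
    linarith
  have keyZero : ∀ Y Z, ip (β₁ Y Y).1 (β₁ Z Z).1 = 0 → β₁ Y Z = 0 := by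
    intro Y Z h
    have hk := keyId Y Z
    rw [h] at hk
    have n1 := (posdef _ (hc1 Y Z).1 (hc1 Y Z).2).1
    have n2 := (posdef _ (hc2 Y Z).1 (hc2 Y Z).2).1
    have e1 : ip (β₁ Y Z).1 (β₁ Y Z).1 = 0 := by linarith
    have e2 : ip (β₁ Y Z).2 (β₁ Y Z).2 = 0 := by linarith
    have z1 := (posdef _ (hc1 Y Z).1 (hc1 Y Z).2).2 e1
    have z2 := (posdef _ (hc2 Y Z).1 (hc2 Y Z).2).2 e2
    have : β₁ Y Z = ((β₁ Y Z).1, (β₁ Y Z).2) := rfl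
    rw [this, z1, z2]
    rfl
  -- β₁ as a bilinear map
  obtain ⟨B, hB⟩ : ∃ B : V →ₗ[ℝ] V →ₗ[ℝ] (Λ × Λ), ∀ X Y, B X Y = β₁ X Y := by
    refine ⟨LinearMap.mk₂ ℝ
      (fun X Y => (proj (α X Y + α (J X) (J Y)), proj (α X (J Y) - α (J X) Y)))
      ?_ ?_ ?_ ?_, ?_⟩
    · intro m₁ m₂ n
      refine Prod.ext ?_ ?_ <;>
        simp only [map_add, map_sub, LinearMap.add_apply, LinearMap.sub_apply,
          Prod.fst_add, Prod.snd_add, Prod.fst, Prod.snd] <;>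
        module
    · intro c m n
      refine Prod.ext ?_ ?_ <;>
        simp only [map_add, map_sub, map_smul, LinearMap.add_apply, LinearMap.sub_apply,
          LinearMap.smul_apply, Prod.smul_fst, Prod.smul_snd, Prod.fst, Prod.snd] <;>
        module
    · intro m n₁ n₂
      refine Prod.ext ?_ ?_ <;>
        simp only [map_add, map_sub, LinearMap.add_apply, LinearMap.sub_apply,
          Prod.fst_add, Prod.snd_add, Prod.fst, Prod.snd] <;>
        module
    · intro c m n
      refine Prod.ext ?_ ?_ <;>
        simp only [map_add, map_sub, map_smul, LinearMap.add_apply, LinearMap.sub_apply,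
          LinearMap.smul_apply, Prod.smul_fst, Prod.smul_snd, Prod.fst, Prod.snd] <;>
        module
    · intro X Y
      rw [hβ₁ X Y, hβ X Y]
      rfl
  -- a vector of maximal rank
  obtain ⟨Y₀, hmax⟩ : ∃ Y₀ : V, ∀ Y : V,
      finrank ℝ (LinearMap.range (B Y)) ≤ finrank ℝ (LinearMap.range (B Y₀)) := by
    have hbdd : BddAbove (Set.range fun Y : V => finrank ℝ (LinearMap.range (B Y))) := by
      refine ⟨finrank ℝ (Λ × Λ), ?_⟩
      rintro x ⟨Y, rfl⟩
      exact Submodule.finrank_le _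
    have hne : (Set.range fun Y : V => finrank ℝ (LinearMap.range (B Y))).Nonempty :=
      ⟨_, ⟨(0:V), rfl⟩⟩
    obtain ⟨Y₀, hY₀⟩ := Nat.sSup_mem hne hbdd
    refine ⟨Y₀, fun Y => ?_⟩
    calc finrank ℝ (LinearMap.range (B Y))
        ≤ sSup (Set.range fun Y : V => finrank ℝ (LinearMap.range (B Y))) :=
          le_csSup hbdd ⟨Y, rfl⟩
      _ = finrank ℝ (LinearMap.range (B Y₀)) := hY₀.symm
  have kerIff : ∀ Y Z : V, B Y Z = 0 ↔ ip (β₁ Y Y).1 (β₁ Z Z).1 = 0 := by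
    intro Y Z
    constructor
    · intro h
      have h0 : β₁ Y Z = 0 := (hB Y Z).symm.trans h
      have hk := keyId Y Z
      rw [h0] at hk
      simpa using hk.symm
    · intro h
      rw [hB]
      exact keyZero Y Z h
  -- every kernel element of B Y₀ is in N(β₁)
  have kerSubN : ∀ Z : V, B Y₀ Z = 0 → ∀ Y, β₁ Y Z = 0 := by
    intro Z hZ
    have hZβ : β₁ Y₀ Z = 0 := (hB Y₀ Z).symm.trans hZ
    have hZβ' : β₁ Z Y₀ = 0 := by
      rw [hβ₁swap Y₀ Z, hZβ]
      show ((0 : Λ × Λ).1, -(0 : Λ × Λ).2) = 0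
      norm_num
    have hZB' : B Z Y₀ = 0 := (hB Z Y₀).trans hZβ'
    have hQadd : (β₁ (Y₀ + Z) (Y₀ + Z)).1 = (β₁ Y₀ Y₀).1 + (β₁ Z Z).1 := by
      have hExp : β₁ (Y₀ + Z) (Y₀ + Z) = β₁ Y₀ Y₀ + β₁ Z Z := by
        have e0 : B (Y₀ + Z) (Y₀ + Z) = B Y₀ Y₀ + B Y₀ Z + B Z Y₀ + B Z Z := by
          simp only [map_add, LinearMap.add_apply]
          abel
        rw [hZ, hZB'] at e0
        rw [hB, hB, hB] at e0
        simpa using e0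
      rw [hExp, Prod.fst_add]
    have hkerle : LinearMap.ker (B (Y₀ + Z)) ≤ LinearMap.ker (B Y₀) := by
      intro Z' hZ'
      rw [LinearMap.mem_ker] at hZ' ⊢
      have h0 : ip (β₁ (Y₀+Z) (Y₀+Z)).1 (β₁ Z' Z').1 = 0 := (kerIff _ _).mp hZ'
      rw [hQadd, map_add, LinearMap.add_apply] at h0
      have n1 := keyNonneg Y₀ Z'
      have n2 := keyNonneg Z Z'
      exact (kerIff _ _).mpr (by linarith)
    have hfr : finrank ℝ (LinearMap.ker (B Y₀)) ≤ finrank ℝ (LinearMap.ker (B (Y₀+Z))) := by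
      have r1 := LinearMap.finrank_range_add_finrank_ker (B (Y₀+Z))
      have r2 := LinearMap.finrank_range_add_finrank_ker (B Y₀)
      have r3 := hmax (Y₀ + Z)
      omega
    have hkerEq : LinearMap.ker (B (Y₀ + Z)) = LinearMap.ker (B Y₀) :=
      Submodule.eq_of_le_of_finrank_le hkerle hfr
    have hZ2 : B (Y₀ + Z) Z = 0 := by
      have : Z ∈ LinearMap.ker (B (Y₀ + Z)) := by
        rw [hkerEq]
        exact LinearMap.mem_ker.mpr hZ
      exact LinearMap.mem_ker.mp this
    have hQZ : ip (β₁ Z Z).1 (β₁ Z Z).1 = 0 := by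
      have h0 : ip (β₁ (Y₀+Z) (Y₀+Z)).1 (β₁ Z Z).1 = 0 := (kerIff _ _).mp hZ2
      rw [hQadd, map_add, LinearMap.add_apply] at h0
      have h1 : ip (β₁ Y₀ Y₀).1 (β₁ Z Z).1 = 0 := (kerIff _ _).mp hZ
      linarith
    have hQZ0 : (β₁ Z Z).1 = 0 :=
      (posdef _ (hc1 Z Z).1 (hc1 Z Z).2).2 hQZ
    intro Y
    apply keyZero Y Z
    rw [hQZ0]
    exact map_zero _
  -- dimension count
  have hfst : ∀ X Y, (β X Y).1 ∈ U₀ := by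
    intro X Y
    rw [hU₀]
    exact ⟨β X Y, βmem X Y, rfl⟩
  have hsnd : ∀ X Y, (β X Y).2 ∈ U₀ := by
    intro X Y
    have h1 : (β (J X) Y).1 ∈ U₀ := hfst (J X) Y
    rw [hJβ X Y] at h1
    have h2 : -(-(β X Y).2) ∈ U₀ := U₀.neg_mem h1
    rwa [neg_neg] at h2
  have hrange : LinearMap.range (B Y₀) ≤ (U₀.map proj).prod (U₀.map proj) := by
    rintro x ⟨Z, rfl⟩
    rw [Submodule.mem_prod, hB Y₀ Z, hβ₁ Y₀ Z]
    exact ⟨Submodule.mem_map_of_mem (hfst Y₀ Z), Submodule.mem_map_of_mem (hsnd Y₀ Z)⟩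
  have hprojv0 : proj v = 0 := by
    have h1 : proj v ∈ L := by
      have h2 : v - proj v ∈ L := hproj₂ v
      have h3 := L.sub_mem hvL h2
      simpa using h3
    rw [hL] at h1
    obtain ⟨a, b, hd⟩ := Submodule.mem_span_pair.mp h1
    have hv' : ip v (proj v) = 0 := hprojv v
    have hw' : ip w (proj v) = 0 := hprojw v
    rw [← hd, map_add, map_smul, map_smul, smul_eq_mul, smul_eq_mul, hvv, hvw] at hv'
    rw [← hd, map_add, map_smul, map_smul, smul_eq_mul, smul_eq_mul, hwv, hww] at hw'
    have hb0 : b = 0 := by linarith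
    have ha0 : a = 0 := by linarith
    rw [← hd, ha0, hb0, zero_smul, zero_smul, add_zero]
  have hM₀s : finrank ℝ (U₀.map proj) + 1 ≤ s := by
    have hrn := LinearMap.finrank_range_add_finrank_ker (proj.comp U₀.subtype)
    have hr : LinearMap.range (proj.comp U₀.subtype) = U₀.map proj := by
      rw [LinearMap.range_comp, Submodule.range_subtype]
    have hkpos : 0 < finrank ℝ (LinearMap.ker (proj.comp U₀.subtype)) := by
      have hzmem : (⟨v, hvU₀⟩ : U₀) ∈ LinearMap.ker (proj.comp U₀.subtype) := by
        rw [LinearMap.mem_ker]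
        show proj v = 0
        exact hprojv0
      rw [Module.finrank_pos_iff]
      refine ⟨⟨⟨⟨v, hvU₀⟩, hzmem⟩, 0, ?_⟩⟩
      intro h
      apply hv0
      simpa [Subtype.ext_iff] using h
    rw [hr] at hrn
    rw [hs]
    omega
  have hprodle : finrank ℝ ((U₀.map proj).prod (U₀.map proj)) ≤
      finrank ℝ (U₀.map proj) + finrank ℝ (U₀.map proj) := by
    rw [LinearMap.prod_eq_sup_map]
    have h1 := Submodule.finrank_sup_add_finrank_inf_eq
      ((U₀.map proj).map (LinearMap.inl ℝ Λ Λ)) ((U₀.map proj).map (LinearMap.inr ℝ Λ Λ))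
    have l1 := Submodule.finrank_map_le (LinearMap.inl ℝ Λ Λ) (U₀.map proj)
    have l2 := Submodule.finrank_map_le (LinearMap.inr ℝ Λ Λ) (U₀.map proj)
    omega
  have hrank : finrank ℝ (LinearMap.range (B Y₀)) ≤
      finrank ℝ ((U₀.map proj).prod (U₀.map proj)) :=
    Submodule.finrank_mono hrange
  have hle : LinearMap.ker (B Y₀) ≤ Submodule.span ℝ {Z : V | ∀ Y, β₁ Y Z = 0} :=
    fun Z hZ => Submodule.subset_span (kerSubN Z (LinearMap.mem_ker.mp hZ))
  have hspan : finrank ℝ (LinearMap.ker (B Y₀)) ≤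
      finrank ℝ (Submodule.span ℝ {Z : V | ∀ Y, β₁ Y Z = 0}) :=
    Submodule.finrank_mono hle
  have hrn0 : finrank ℝ (LinearMap.range (B Y₀)) + finrank ℝ (LinearMap.ker (B Y₀)) = 2 * n := by
    rw [LinearMap.finrank_range_add_finrank_ker, hV]
  omega
end

section
/- Let α : V × V → Λ be a symmetric bilinear map satisfying ⟨α(X,Y),w⟩ = −(X,Y) for all X,Y ∈ V, whose associated bilinear map β is flat and satisfies the compatibility condition ⟨⟨β(X,Y),γ(Z,T)⟩⟩ = ⟨⟨β(X,T),γ(Z,Y)⟩⟩ for all X,Y,Z,T ∈ V. Suppose S(β) is degenerate, s ≤ n − 1, and v ∈ U₀ is a light-like vector with S(β) ∩ S(β)^⊥ = span{(v,0),(0,v)}. Then ⟨α(X,Y),v⟩ = 0 for all X,Y ∈ V. -/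
/-!
Put `b X Y = α X Y + α (J X) (J Y)`, so that `β X Y = (b X Y, b X (J Y))` and
`γ X Y = (α X Y, α X (J Y))`. As `(v, 0)` lies in the radical of `S(β)`, every `b X Y` is
orthogonal to `v`, while `⟨b X Y, w⟩ = -2 (X, Y)`; this forces `⟨v, w⟩ ≠ 0`, and
`P = b + (2 / ⟨v, w⟩) (·, ·) v` then takes values in `U₀ ∩ {v, w}ᗮ`, a spacelike subspace of
dimension `< s`. Flatness of `β` turns into the symmetric identity
`⟨μ(X,Y), μ(Z,T)⟩ = ⟨μ(X,Z), μ(Y,T)⟩` for `μ = (P, P ∘ (id × J))` and the *positive* form on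
`Λ × Λ`. By a Moore-type dimension count (`2 (s - 1) + 2 < 2 n`) there are nonzero
`Y₀, X ∈ V` in the nullity of `μ` with `X ⊥ Y₀, J Y₀`. For such a null direction `Y` the
compatibility condition at `(Y, Y, Z, T)` reads
`|Y|² ⟨α(Z,T), v⟩ = (Y,T) ⟨α(Z,Y), v⟩ - (Y,JT) ⟨α(Z,JY), v⟩`: with `Y = Y₀` it kills
`⟨α(·, X), v⟩` and `⟨α(·, J X), v⟩`, and then with `Y = X` it kills `⟨α, v⟩`.
-/

open Module

section Lorentz

variable {ι Λ : Type*} [Fintype ι] [DecidableEq ι] [AddCommGroup Λ] [Module ℝ Λ]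

def IsLorentzOrthonormal (ip : LinearMap.BilinForm ℝ Λ) (e : Basis ι ℝ Λ) (i₀ : ι) : Prop :=
  ∀ i j, ip (e i) (e j) = if i = j then (if i = i₀ then -1 else 1) else 0

variable {ip : LinearMap.BilinForm ℝ Λ} {e : Basis ι ℝ Λ} {i₀ : ι}

lemma lorentz_apply_eq_sum (he : IsLorentzOrthonormal ip e i₀) (x y : Λ) :
    ip x y = ∑ i, (if i = i₀ then -1 else 1) * (e.repr x i * e.repr y i) := by
  conv_lhs => rw [← e.sum_repr x, ← e.sum_repr y]
  simp only [map_sum, map_smul, LinearMap.sum_apply, LinearMap.smul_apply, smul_eq_mul, he _,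
    mul_ite, mul_zero, Finset.sum_ite_eq', Finset.mem_univ, if_true]
  exact Finset.sum_congr rfl fun i _ => by split_ifs <;> ring

lemma lorentz_comm (he : IsLorentzOrthonormal ip e i₀) (x y : Λ) : ip x y = ip y x := by
  simp only [lorentz_apply_eq_sum he, mul_comm (e.repr x _)]

lemma lorentz_self_eq_sum_sq_of_repr_eq_zero (he : IsLorentzOrthonormal ip e i₀) {y : Λ}
    (hy : e.repr y i₀ = 0) : ip y y = ∑ i, e.repr y i ^ 2 := by
  rw [lorentz_apply_eq_sum he]
  refine Finset.sum_congr rfl fun i _ => ?_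
  split_ifs with hi
  · simp [hi, hy]
  · ring

lemma eq_zero_of_lorentz_self_eq_zero (he : IsLorentzOrthonormal ip e i₀) {y : Λ}
    (hy : e.repr y i₀ = 0) (hyy : ip y y = 0) : y = 0 := by
  rw [lorentz_self_eq_sum_sq_of_repr_eq_zero he hy,
    Finset.sum_eq_zero_iff_of_nonneg fun i _ => sq_nonneg _] at hyy
  exact e.repr.injective <| Finsupp.ext fun i => by simpa using hyy i (Finset.mem_univ i)

lemma exists_repr_sub_smul_eq_zero_of_null (he : IsLorentzOrthonormal ip e i₀) {w : Λ}
    (hw0 : w ≠ 0) (hww : ip w w = 0) {x : Λ} (hxw : ip x w = 0) :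
    ∃ t : ℝ, e.repr (x - t • w) i₀ = 0 ∧ ip (x - t • w) (x - t • w) = ip x x := by
  have hw₀ : e.repr w i₀ ≠ 0 := fun h => hw0 (eq_zero_of_lorentz_self_eq_zero he h hww)
  refine ⟨e.repr x i₀ / e.repr w i₀, by simp [hw₀], ?_⟩
  simp only [map_sub, map_smul, LinearMap.sub_apply, LinearMap.smul_apply, smul_eq_mul, hxw,
    lorentz_comm he w x, hww]
  ring

lemma lorentz_self_nonneg_of_orthogonal_null (he : IsLorentzOrthonormal ip e i₀) {w : Λ}
    (hw0 : w ≠ 0) (hww : ip w w = 0) {x : Λ} (hxw : ip x w = 0) : 0 ≤ ip x x := by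
  obtain ⟨t, ht, hx⟩ := exists_repr_sub_smul_eq_zero_of_null he hw0 hww hxw
  rw [← hx, lorentz_self_eq_sum_sq_of_repr_eq_zero he ht]
  exact Finset.sum_nonneg fun i _ => sq_nonneg _

lemma exists_eq_smul_of_orthogonal_null (he : IsLorentzOrthonormal ip e i₀) {w : Λ}
    (hw0 : w ≠ 0) (hww : ip w w = 0) {x : Λ} (hxw : ip x w = 0) (hxx : ip x x = 0) :
    ∃ t : ℝ, x = t • w := by
  obtain ⟨t, ht, hx⟩ := exists_repr_sub_smul_eq_zero_of_null he hw0 hww hxw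
  exact ⟨t, sub_eq_zero.mp (eq_zero_of_lorentz_self_eq_zero he ht (hx.trans hxx))⟩

lemma eq_zero_of_lorentz_orthogonal_null_pair (he : IsLorentzOrthonormal ip e i₀) {w v : Λ}
    (hw0 : w ≠ 0) (hww : ip w w = 0) (hvw : ip v w ≠ 0) {x : Λ} (hxw : ip x w = 0)
    (hxv : ip x v = 0) (hxx : ip x x = 0) : x = 0 := by
  obtain ⟨t, rfl⟩ := exists_eq_smul_of_orthogonal_null he hw0 hww hxw hxx
  rw [map_smul, LinearMap.smul_apply, smul_eq_mul, lorentz_comm he w] at hxv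
  rw [(mul_eq_zero.mp hxv).resolve_right hvw, zero_smul]

lemma apply_ne_zero_of_lorentz_null (he : IsLorentzOrthonormal ip e i₀) {w v : Λ}
    (hw0 : w ≠ 0) (hww : ip w w = 0) (hvv : ip v v = 0) (hv0 : v ≠ 0) {x : Λ}
    (hxv : ip x v = 0) (hxw : ip x w ≠ 0) : ip v w ≠ 0 := by
  intro hvw
  obtain ⟨t, rfl⟩ := exists_eq_smul_of_orthogonal_null he hw0 hww hvw hvv
  rw [map_smul, smul_eq_mul] at hxv
  exact hv0 (by rw [(mul_eq_zero.mp hxv).resolve_right hxw, zero_smul])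

end Lorentz

section Moore

variable {K V E : Type*} [Field K] [AddCommGroup V] [Module K V] [AddCommGroup E] [Module K E]
  {B : LinearMap.BilinForm K E} {μ : V →ₗ[K] V →ₗ[K] E}

lemma apply_mem_orthogonal_range_of_apply_eq_zero
    (hμ : ∀ X Y Z T, B (μ X Y) (μ Z T) = B (μ X Z) (μ Y T)) {X₀ X : V} (hX : μ X₀ X = 0)
    (Y : V) : μ X Y ∈ B.orthogonal (LinearMap.range (μ X₀)) := by
  rintro _ ⟨Z, rfl⟩
  simp [hμ, hX]

variable [FiniteDimensional K V] [FiniteDimensional K E]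

-- `V'' = V' ⊓ ker (μ X₀)` and `G' = G ⊓ (μ X₀ '' V')ᗮ`; by anisotropy `μ X₀ '' V'` and `G'`
-- are independent in `G`.
lemma exists_descent_of_apply_self_ne_zero
    (hμ : ∀ X Y Z T, B (μ X Y) (μ Z T) = B (μ X Z) (μ Y T)) {G : Submodule K E}
    (hG : ∀ x ∈ G, B x x = 0 → x = 0) {V' : Submodule K V}
    (hval : ∀ X ∈ V', ∀ Y ∈ V', μ X Y ∈ G) {X₀ : V} (hX₀ : X₀ ∈ V') (hX₀₀ : μ X₀ X₀ ≠ 0) :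
    ∃ G' ≤ G, ∃ V'' ≤ V', (∀ X ∈ V'', ∀ Y ∈ V'', μ X Y ∈ G') ∧ finrank K G' < finrank K G ∧
      finrank K G' + finrank K V' ≤ finrank K G + finrank K V'' := by
  set f := μ X₀ ∘ₗ V'.subtype
  have hR : LinearMap.range f ≤ G := by
    rintro _ ⟨Y, rfl⟩
    exact hval X₀ hX₀ Y Y.2
  have hR0 : finrank K (LinearMap.range f) ≠ 0 := by
    rw [Ne, Submodule.finrank_eq_zero, Submodule.eq_bot_iff]
    exact fun h => hX₀₀ (h _ ⟨⟨X₀, hX₀⟩, rfl⟩)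
  set G' := G ⊓ B.orthogonal (LinearMap.range f)
  have hdisj : LinearMap.range f ⊓ G' = ⊥ :=
    (Submodule.eq_bot_iff _).mpr fun x ⟨hxR, hxG, hxO⟩ => hG x hxG (hxO x hxR)
  have hsum : finrank K (LinearMap.range f) + finrank K G' ≤ finrank K G := by
    have := Submodule.finrank_sup_add_finrank_inf_eq (LinearMap.range f) G'
    rw [hdisj, finrank_bot, add_zero] at this
    exact this ▸ Submodule.finrank_mono (sup_le hR inf_le_left)
  refine ⟨G', inf_le_left, (LinearMap.ker f).map V'.subtype, ?_, ?_, by omega, ?_⟩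
  · rintro _ ⟨X, -, rfl⟩
    exact X.2
  · rintro _ ⟨X, hX, rfl⟩ _ ⟨Y, -, rfl⟩
    exact ⟨hval _ X.2 _ Y.2, B.orthogonal_le (LinearMap.range_comp_le_range _ _)
      (apply_mem_orthogonal_range_of_apply_eq_zero hμ hX Y)⟩
  · have := LinearMap.finrank_range_add_finrank_ker f
    rw [Submodule.finrank_map_subtype_eq]
    omega

lemma exists_ne_zero_apply_self_eq_zero
    (hμ : ∀ X Y Z T, B (μ X Y) (μ Z T) = B (μ X Z) (μ Y T)) {G : Submodule K E}
    (hG : ∀ x ∈ G, B x x = 0 → x = 0) {V' : Submodule K V}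
    (hval : ∀ X ∈ V', ∀ Y ∈ V', μ X Y ∈ G) (hdim : finrank K G < finrank K V') :
    ∃ Y ∈ V', Y ≠ 0 ∧ μ Y Y = 0 := by
  induction hd : finrank K G using Nat.strong_induction_on generalizing G V' with
  | _ d ih =>
  by_contra! hne
  have hV' : V' ≠ ⊥ := by
    rintro rfl
    simp at hdim
  obtain ⟨X₀, hX₀, hX₀0⟩ := Submodule.exists_mem_ne_zero_of_ne_bot hV'
  obtain ⟨G', hG'G, V'', hV'', hval', hlt, hle⟩ :=
    exists_descent_of_apply_self_ne_zero hμ hG hval hX₀ (hne X₀ hX₀ hX₀0)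
  obtain ⟨Y, hY, hY0, hYY⟩ :=
    ih _ (hd ▸ hlt) (fun x hx => hG x (hG'G hx)) hval' (by omega) rfl
  exact hne Y (hV'' hY) hY0 hYY

lemma exists_ne_zero_apply_eq_zero
    (hμ : ∀ X Y Z T, B (μ X Y) (μ Z T) = B (μ X Z) (μ Y T)) {G : Submodule K E}
    (hG : ∀ x ∈ G, B x x = 0 → x = 0) (hval : ∀ X Y, μ X Y ∈ G) {V' : Submodule K V}
    (hdim : finrank K G < finrank K V') : ∃ Y ∈ V', Y ≠ 0 ∧ ∀ Z, μ Y Z = 0 := by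
  obtain ⟨Y, hY, hY0, hYY⟩ :=
    exists_ne_zero_apply_self_eq_zero hμ hG (fun X _ Y _ => hval X Y) hdim
  refine ⟨Y, hY, hY0, fun Z => hG _ (hval Y Z) ?_⟩
  rw [hμ, hYY, map_zero, LinearMap.zero_apply]

end Moore

lemma finrank_le_finrank_ker_add_two {K V : Type*} [Field K] [AddCommGroup V] [Module K V]
    [FiniteDimensional K V] (φ : V →ₗ[K] K × K) :
    finrank K V ≤ finrank K (LinearMap.ker φ) + 2 := by
  have := φ.finrank_range_add_finrank_ker
  have := (LinearMap.range φ).finrank_le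
  rw [finrank_prod, finrank_self] at this
  omega

lemma finrank_submodule_prod_le {K M N : Type*} [Field K] [AddCommGroup M] [Module K M]
    [AddCommGroup N] [Module K N] (P : Submodule K M) (Q : Submodule K N)
    [FiniteDimensional K P] [FiniteDimensional K Q] :
    finrank K (P.prod Q) ≤ finrank K P + finrank K Q := by
  have h := (P.subtype.prodMap Q.subtype).finrank_range_le
  rwa [LinearMap.range_prodMap, Submodule.range_subtype, Submodule.range_subtype,
    finrank_prod] at h

section ComplexStructure

variable {R V Λ : Type*} [CommRing R] [AddCommGroup V] [Module R V] [AddCommGroup Λ]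
  [Module R Λ] {J : V →ₗ[R] V} {α : V →ₗ[R] V →ₗ[R] Λ}

def jSym (α : V →ₗ[R] V →ₗ[R] Λ) (J : V →ₗ[R] V) : V →ₗ[R] V →ₗ[R] Λ :=
  α + α.compl₁₂ J J

lemma jSym_apply (X Y : V) : jSym α J X Y = α X Y + α (J X) (J Y) := rfl

lemma jSym_apply_right_J (hJ : ∀ X, J (J X) = -X) (X Y : V) :
    jSym α J X (J Y) = α X (J Y) - α (J X) Y := by
  simp [jSym_apply, hJ, sub_eq_add_neg]

lemma jSym_comm (hα : ∀ X Y, α X Y = α Y X) (X Y : V) : jSym α J X Y = jSym α J Y X := by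
  simp [jSym_apply, hα X Y, hα (J X)]

lemma jSym_apply_J_comm (hJ : ∀ X, J (J X) = -X) (hα : ∀ X Y, α X Y = α Y X) (X Y : V) :
    jSym α J X (J Y) = -jSym α J Y (J X) := by
  rw [jSym_apply_right_J hJ, jSym_apply_right_J hJ, hα X, hα (J X)]
  abel

-- `β = pairJ (jSym α J) J` and `γ = pairJ α J`.
def pairJ (P : V →ₗ[R] V →ₗ[R] Λ) (J : V →ₗ[R] V) : V →ₗ[R] V →ₗ[R] Λ × Λ :=
  P.compr₂ (LinearMap.inl R Λ Λ) + (P.compl₂ J).compr₂ (LinearMap.inr R Λ Λ)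

@[simp]
lemma pairJ_apply (P : V →ₗ[R] V →ₗ[R] Λ) (X Y : V) : pairJ P J X Y = (P X Y, P X (J Y)) := by
  simp [pairJ]

def sumForm (B : LinearMap.BilinForm R Λ) : LinearMap.BilinForm R (Λ × Λ) :=
  B.compl₁₂ (LinearMap.fst R Λ Λ) (LinearMap.fst R Λ Λ) +
    B.compl₁₂ (LinearMap.snd R Λ Λ) (LinearMap.snd R Λ Λ)

@[simp]
lemma sumForm_apply (B : LinearMap.BilinForm R Λ) (ξ η : Λ × Λ) :
    sumForm B ξ η = B ξ.1 η.1 + B ξ.2 η.2 := rfl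

lemma sumForm_pairJ_jSym_exchange (hJ : ∀ X, J (J X) = -X) (hα : ∀ X Y, α X Y = α Y X)
    {B : LinearMap.BilinForm R Λ}
    (hflat : ∀ X Y Z T,
      B (jSym α J X Y) (jSym α J Z T) - B (jSym α J X (J Y)) (jSym α J Z (J T)) =
        B (jSym α J X T) (jSym α J Z Y) - B (jSym α J X (J T)) (jSym α J Z (J Y)))
    (X Y Z T : V) :
    sumForm B (pairJ (jSym α J) J X Y) (pairJ (jSym α J) J Z T) =
      sumForm B (pairJ (jSym α J) J X Z) (pairJ (jSym α J) J Y T) := by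
  have h := hflat X Y T Z
  rw [jSym_comm hα T Z, jSym_apply_J_comm hJ hα T Z, jSym_comm hα T Y,
    jSym_apply_J_comm hJ hα T Y] at h
  simp only [sumForm_apply, pairJ_apply, map_neg] at h ⊢
  linear_combination h

lemma sumForm_pairJ_add_null {B : LinearMap.BilinForm R Λ} (hB : ∀ x y, B x y = B y x)
    {b : V →ₗ[R] V →ₗ[R] Λ} {v : Λ} (hbv : ∀ X Y, B (b X Y) v = 0) (hvv : B v v = 0)
    (h : V →ₗ[R] V →ₗ[R] R) (J : V →ₗ[R] V) (X Y Z T : V) :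
    sumForm B (pairJ (b + h.compr₂ (LinearMap.toSpanSingleton R Λ v)) J X Y)
        (pairJ (b + h.compr₂ (LinearMap.toSpanSingleton R Λ v)) J Z T) =
      sumForm B (pairJ b J X Y) (pairJ b J Z T) := by
  simp [hbv, hvv, hB v]

end ComplexStructure

section Lightlike

variable {ι V Λ : Type*} [Fintype ι] [DecidableEq ι] [AddCommGroup V] [Module ℝ V]
  [AddCommGroup Λ] [Module ℝ Λ] {ip : LinearMap.BilinForm ℝ Λ} {e : Basis ι ℝ Λ} {i₀ : ι}
  {v w : Λ}

lemma eq_zero_of_sumForm_self_eq_zero (he : IsLorentzOrthonormal ip e i₀) (hw0 : w ≠ 0)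
    (hww : ip w w = 0) (hvw : ip v w ≠ 0) {x : Λ × Λ}
    (hx : x ∈ (LinearMap.ker (ip.flip v) ⊓ LinearMap.ker (ip.flip w)).prod
      (LinearMap.ker (ip.flip v) ⊓ LinearMap.ker (ip.flip w)))
    (hxx : sumForm ip x x = 0) : x = 0 := by
  obtain ⟨⟨hx₁v, hx₁w⟩, ⟨hx₂v, hx₂w⟩⟩ := hx
  have h₁ := lorentz_self_nonneg_of_orthogonal_null he hw0 hww hx₁w
  have h₂ := lorentz_self_nonneg_of_orthogonal_null he hw0 hww hx₂w
  rw [sumForm_apply] at hxx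
  exact Prod.ext (eq_zero_of_lorentz_orthogonal_null_pair he hw0 hww hvw hx₁w hx₁v (by linarith))
    (eq_zero_of_lorentz_orthogonal_null_pair he hw0 hww hvw hx₂w hx₂v (by linarith))

variable [FiniteDimensional ℝ V] [FiniteDimensional ℝ Λ] {J : V →ₗ[ℝ] V}
  {α : V →ₗ[ℝ] V →ₗ[ℝ] Λ} {g : LinearMap.BilinForm ℝ V}

lemma exists_null_pair_jSym (he : IsLorentzOrthonormal ip e i₀) (hw0 : w ≠ 0)
    (hww : ip w w = 0) (hvv : ip v v = 0) (hvw : ip v w ≠ 0)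
    (hJ : ∀ X, J (J X) = -X) (hα : ∀ X Y, α X Y = α Y X)
    (hflat : ∀ X Y Z T,
      ip (jSym α J X Y) (jSym α J Z T) - ip (jSym α J X (J Y)) (jSym α J Z (J T)) =
        ip (jSym α J X T) (jSym α J Z Y) - ip (jSym α J X (J T)) (jSym α J Z (J Y)))
    (hbw : ∀ X Y, ip (jSym α J X Y) w = -(2 * g X Y)) (hbv : ∀ X Y, ip (jSym α J X Y) v = 0)
    {U : Submodule ℝ Λ} (hbU : ∀ X Y, jSym α J X Y ∈ U) (hvU : v ∈ U)
    (hdim : 2 * finrank ℝ U < finrank ℝ V) :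
    ∃ Y₀ X, Y₀ ≠ 0 ∧ X ≠ 0 ∧ g Y₀ X = 0 ∧ g Y₀ (J X) = 0 ∧
      (∀ Z, jSym α J Y₀ Z = -((2 / ip v w * g Y₀ Z) • v)) ∧
      ∀ Z, jSym α J X Z = -((2 / ip v w * g X Z) • v) := by
  set P := jSym α J + ((2 / ip v w) • g).compr₂ (LinearMap.toSpanSingleton ℝ Λ v)
  have hPapp : ∀ X Y, P X Y = jSym α J X Y + (2 / ip v w * g X Y) • v := fun X Y => by
    simp [P]
  set Q := U ⊓ (LinearMap.ker (ip.flip v) ⊓ LinearMap.ker (ip.flip w))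
  have hPQ : ∀ X Y, P X Y ∈ Q := fun X Y => by
    rw [hPapp]
    refine ⟨U.add_mem (hbU X Y) (U.smul_mem _ hvU), by simp [hbv, hvv], ?_⟩
    show ip _ w = 0
    simp only [map_add, map_smul, LinearMap.add_apply, LinearMap.smul_apply, smul_eq_mul, hbw]
    field_simp
    ring
  have hQ : finrank ℝ Q < finrank ℝ U := Submodule.finrank_lt_finrank_of_lt <|
    lt_of_le_of_ne inf_le_left fun h => hvw (h ▸ hvU).2.2
  have hG : ∀ x ∈ Q.prod Q, sumForm ip x x = 0 → x = 0 := fun x hx =>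
    eq_zero_of_sumForm_self_eq_zero he hw0 hww hvw
      (Submodule.prod_mono inf_le_right inf_le_right hx)
  have hμ : ∀ X Y Z T, sumForm ip (pairJ P J X Y) (pairJ P J Z T) =
      sumForm ip (pairJ P J X Z) (pairJ P J Y T) := fun X Y Z T => by
    simp only [P, sumForm_pairJ_add_null (lorentz_comm he) hbv hvv]
    exact sumForm_pairJ_jSym_exchange hJ hα hflat X Y Z T
  have hval : ∀ X Y, pairJ P J X Y ∈ Q.prod Q := fun X Y => by
    simpa using ⟨hPQ X Y, hPQ X (J Y)⟩
  have hGV : finrank ℝ (Q.prod Q) + 2 < finrank ℝ V := by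
    have := finrank_submodule_prod_le Q Q
    omega
  obtain ⟨Y₀, -, hY₀, hPY₀⟩ := exists_ne_zero_apply_eq_zero hμ hG hval
    (V' := ⊤) (by rw [finrank_top]; omega)
  obtain ⟨X, hX, hX0, hPX⟩ := exists_ne_zero_apply_eq_zero hμ hG hval
    (V' := LinearMap.ker ((g Y₀).prod (g Y₀ ∘ₗ J)))
    (by have := finrank_le_finrank_ker_add_two ((g Y₀).prod (g Y₀ ∘ₗ J)); omega)
  obtain ⟨hY₀X, hY₀JX⟩ : g Y₀ X = 0 ∧ g Y₀ (J X) = 0 := by simpa [Prod.ext_iff] using hX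
  have hnull : ∀ Y, (∀ Z, pairJ P J Y Z = 0) →
      ∀ Z, jSym α J Y Z = -((2 / ip v w * g Y Z) • v) := fun Y hY Z => by
    rw [eq_neg_iff_add_eq_zero, ← hPapp]
    simpa using congrArg Prod.fst (hY Z)
  exact ⟨Y₀, X, hY₀, hX0, hY₀X, hY₀JX, hnull Y₀ hPY₀, hnull X hPX⟩

end Lightlike

section NullDirections

variable {K V Λ : Type*} [Field K] [AddCommGroup V] [Module K V] [AddCommGroup Λ] [Module K Λ]
  {J : V →ₗ[K] V} {g : LinearMap.BilinForm K V}

lemma apply_J_self_eq_zero [CharZero K] (hJ : ∀ X, J (J X) = -X)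
    (hgsymm : ∀ X Y, g X Y = g Y X) (hgJ : ∀ X Y, g (J X) (J Y) = g X Y) (Y : V) :
    g Y (J Y) = 0 := by
  have h := hgJ (J Y) Y
  rw [hJ, map_neg, LinearMap.neg_apply, hgsymm (J Y)] at h
  linear_combination (-1 / 2 : K) * h

lemma compat_identity_of_null {α : V →ₗ[K] V →ₗ[K] Λ} {ip : LinearMap.BilinForm K Λ}
    (hcompat : ∀ X Y Z T, ip (jSym α J X Y) (α Z T) - ip (jSym α J X (J Y)) (α Z (J T)) =
      ip (jSym α J X T) (α Z Y) - ip (jSym α J X (J T)) (α Z (J Y)))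
    {v : Λ} {c : K} (hc : c ≠ 0) {Y : V} (hY : ∀ Z, jSym α J Y Z = -((c * g Y Z) • v))
    (hgY : g Y (J Y) = 0) (Z T : V) :
    g Y Y * ip v (α Z T) = g Y T * ip v (α Z Y) - g Y (J T) * ip v (α Z (J Y)) := by
  have h := hcompat Y Y Z T
  simp only [hY, hgY, map_neg, map_smul, LinearMap.neg_apply, LinearMap.smul_apply, smul_eq_mul,
    mul_zero, zero_mul] at h
  refine mul_left_cancel₀ hc ?_
  linear_combination -h

lemma eq_zero_of_null_pair (hJ : ∀ X, J (J X) = -X) {f : V → V → K} {Y₀ X : V}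
    (hY₀ : g Y₀ Y₀ ≠ 0) (hX : g X X ≠ 0) (hY₀X : g Y₀ X = 0) (hY₀JX : g Y₀ (J X) = 0)
    (hfY₀ : ∀ Z T, g Y₀ Y₀ * f Z T = g Y₀ T * f Z Y₀ - g Y₀ (J T) * f Z (J Y₀))
    (hfX : ∀ Z T, g X X * f Z T = g X T * f Z X - g X (J T) * f Z (J X)) (Z T : V) :
    f Z T = 0 := by
  have hZX : f Z X = 0 := by
    simpa [hY₀X, hY₀JX, hY₀] using hfY₀ Z X
  have hZJX : f Z (J X) = 0 := by
    simpa [hJ, hY₀X, hY₀JX, hY₀] using hfY₀ Z (J X)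
  simpa [hZX, hZJX, hX] using hfX Z T

end NullDirections

theorem stmt_11_general
    (n p : ℕ) (hn : 1 ≤ n) (hp : 2 ≤ p)
    {V : Type} [AddCommGroup V] [Module ℝ V] [FiniteDimensional ℝ V]
    (hV : finrank ℝ V = 2 * n)
    (J : V →ₗ[ℝ] V) (hJ : ∀ X, J (J X) = -X)
    {Λ : Type} [AddCommGroup Λ] [Module ℝ Λ] [FiniteDimensional ℝ Λ]
    (ip : LinearMap.BilinForm ℝ Λ) (hipsymm : ∀ ξ η, ip ξ η = ip η ξ)
    (e : Basis (Fin p) ℝ Λ)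
    (he : ∀ i j, ip (e i) (e j) =
      if i = j then (if (i : ℕ) = 0 then (-1 : ℝ) else 1) else 0)
    (g : LinearMap.BilinForm ℝ V) (hgsymm : ∀ X Y, g X Y = g Y X)
    (hgpos : ∀ X : V, X ≠ 0 → 0 < g X X)
    (hgJ : ∀ X Y, g (J X) (J Y) = g X Y)
    (α : V →ₗ[ℝ] V →ₗ[ℝ] Λ) (hαsymm : ∀ X Y, α X Y = α Y X)
    (w : Λ) (hw0 : w ≠ 0) (hww : ip w w = 0)
    (hαw : ∀ X Y, ip (α X Y) w = - g X Y)
    (bW : LinearMap.BilinForm ℝ (Λ × Λ))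
    (hbW : ∀ ξ η, bW ξ η = ip ξ.1 η.1 - ip ξ.2 η.2)
    (β : V → V → Λ × Λ)
    (hβ : ∀ X Y, β X Y = (α X Y + α (J X) (J Y), α X (J Y) - α (J X) Y))
    (γ : V → V → Λ × Λ)
    (hγ : ∀ X Y, γ X Y = (α X Y, α X (J Y)))
    (hflat : ∀ X Y Z T, bW (β X Y) (β Z T) = bW (β X T) (β Z Y))
    (hcompat : ∀ X Y Z T, bW (β X Y) (γ Z T) = bW (β X T) (γ Z Y))
    (Sβ : Submodule ℝ (Λ × Λ))
    (hSβ : Sβ = Submodule.span ℝ {z : Λ × Λ | ∃ X Y, z = β X Y})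
    (U₀ : Submodule ℝ Λ)
    (hU₀ : U₀ = Submodule.map (LinearMap.fst ℝ Λ Λ) Sβ)
    (s : ℕ) (hs : s = finrank ℝ U₀) (hsn : s ≤ n - 1)
    (v : Λ) (hvU₀ : v ∈ U₀) (hv0 : v ≠ 0) (hvv : ip v v = 0)
    (hrad : Sβ ⊓ bW.orthogonal Sβ =
      Submodule.span ℝ {((v, 0) : Λ × Λ), ((0, v) : Λ × Λ)}) :
    ∀ X Y : V, ip (α X Y) v = 0 := by
  have hLorentz : IsLorentzOrthonormal ip e ⟨0, by omega⟩ := by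
    simpa [IsLorentzOrthonormal, Fin.ext_iff] using he
  have hβJ : ∀ X Y, β X Y = pairJ (jSym α J) J X Y := fun X Y => by
    simp [hβ, jSym_apply, jSym_apply_right_J hJ]
  have hβS : ∀ X Y, β X Y ∈ Sβ := fun X Y => hSβ ▸ Submodule.subset_span ⟨X, Y, rfl⟩
  have hbv : ∀ X Y, ip (jSym α J X Y) v = 0 := fun X Y => by
    have hrad_v : ((v, 0) : Λ × Λ) ∈ Sβ ⊓ bW.orthogonal Sβ :=
      hrad ▸ Submodule.subset_span (by simp)
    simpa [hbW, hβJ] using hrad_v.2 _ (hβS X Y)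
  have hbw : ∀ X Y, ip (jSym α J X Y) w = -(2 * g X Y) := fun X Y => by
    simp only [jSym_apply, map_add, LinearMap.add_apply, hαw, hgJ]
    ring
  have hbU : ∀ X Y, jSym α J X Y ∈ U₀ := fun X Y => by
    simpa [hU₀, hβJ] using Submodule.mem_map_of_mem (f := LinearMap.fst ℝ Λ Λ) (hβS X Y)
  have hvw : ip v w ≠ 0 := by
    have : Nontrivial V := Module.nontrivial_of_finrank_pos (R := ℝ) (by omega)
    obtain ⟨X, hX⟩ := exists_ne (0 : V)
    refine apply_ne_zero_of_lorentz_null hLorentz hw0 hww hvv hv0 (hbv X X) ?_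
    simpa [hbw] using (hgpos X hX).ne'
  obtain ⟨Y₀, X, hY₀, hX, hY₀X, hY₀JX, hnullY₀, hnullX⟩ :=
    exists_null_pair_jSym hLorentz hw0 hww hvv hvw hJ hαsymm
      (fun X Y Z T => by simpa [hbW, hβJ] using hflat X Y Z T) hbw hbv hbU hvU₀ (by omega)
  have hcompat_ip := fun X Y Z T => by simpa [hbW, hβJ, hγ] using hcompat X Y Z T
  have hc : 2 / ip v w ≠ 0 := div_ne_zero two_ne_zero hvw
  intro Z T
  rw [hipsymm]
  exact eq_zero_of_null_pair hJ (hgpos _ hY₀).ne' (hgpos _ hX).ne' hY₀X hY₀JX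
    (compat_identity_of_null hcompat_ip hc hnullY₀ (apply_J_self_eq_zero hJ hgsymm hgJ Y₀))
    (compat_identity_of_null hcompat_ip hc hnullX (apply_J_self_eq_zero hJ hgsymm hgJ X)) Z T

/-- Under the compatibility condition between β and γ, if S(β) is degenerate
and s ≤ n − 1 then ⟨α(X,Y),v⟩ = 0 for all X,Y. -/
theorem stmt_11
    (n p : ℕ) (hn : 1 ≤ n) (hp : 2 ≤ p)
    {V : Type} [AddCommGroup V] [Module ℝ V] [FiniteDimensional ℝ V]
    (hV : finrank ℝ V = 2 * n)
    (J : V →ₗ[ℝ] V) (hJ : ∀ X, J (J X) = -X)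
    {Λ : Type} [AddCommGroup Λ] [Module ℝ Λ] [FiniteDimensional ℝ Λ]
    (hΛ : finrank ℝ Λ = p)
    (ip : LinearMap.BilinForm ℝ Λ) (hipsymm : ∀ ξ η, ip ξ η = ip η ξ)
    (e : Basis (Fin p) ℝ Λ)
    (he : ∀ i j, ip (e i) (e j) =
      if i = j then (if (i : ℕ) = 0 then (-1 : ℝ) else 1) else 0)
    (g : LinearMap.BilinForm ℝ V) (hgsymm : ∀ X Y, g X Y = g Y X)
    (hgpos : ∀ X : V, X ≠ 0 → 0 < g X X)
    (hgJ : ∀ X Y, g (J X) (J Y) = g X Y)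
    (α : V →ₗ[ℝ] V →ₗ[ℝ] Λ) (hαsymm : ∀ X Y, α X Y = α Y X)
    (w : Λ) (hw0 : w ≠ 0) (hww : ip w w = 0)
    (hαw : ∀ X Y, ip (α X Y) w = - g X Y)
    (bW : LinearMap.BilinForm ℝ (Λ × Λ))
    (hbW : ∀ ξ η, bW ξ η = ip ξ.1 η.1 - ip ξ.2 η.2)
    (β : V → V → Λ × Λ)
    (hβ : ∀ X Y, β X Y = (α X Y + α (J X) (J Y), α X (J Y) - α (J X) Y))
    (γ : V → V → Λ × Λ)
    (hγ : ∀ X Y, γ X Y = (α X Y, α X (J Y)))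
    (hflat : ∀ X Y Z T, bW (β X Y) (β Z T) = bW (β X T) (β Z Y))
    (hcompat : ∀ X Y Z T, bW (β X Y) (γ Z T) = bW (β X T) (γ Z Y))
    (Sβ : Submodule ℝ (Λ × Λ))
    (hSβ : Sβ = Submodule.span ℝ {z : Λ × Λ | ∃ X Y, z = β X Y})
    (U₀ : Submodule ℝ Λ)
    (hU₀ : U₀ = Submodule.map (LinearMap.fst ℝ Λ Λ) Sβ)
    (s : ℕ) (hs : s = finrank ℝ U₀) (hsn : s ≤ n - 1)
    (hdeg : Sβ ⊓ bW.orthogonal Sβ ≠ ⊥)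
    (v : Λ) (hvU₀ : v ∈ U₀) (hv0 : v ≠ 0) (hvv : ip v v = 0)
    (hrad : Sβ ⊓ bW.orthogonal Sβ =
      Submodule.span ℝ {((v, 0) : Λ × Λ), ((0, v) : Λ × Λ)}) :
    ∀ X Y : V, ip (α X Y) v = 0 :=
  stmt_11_general n p hn hp hV J hJ ip hipsymm e he g hgsymm hgpos hgJ α hαsymm w hw0 hww hαw bW hbW
    β hβ γ hγ hflat hcompat Sβ hSβ U₀ hU₀ s hs hsn v hvU₀ hv0 hvv hrad
end

section
/- The map ψ is an injective isometric immersion: ψ is differentiable at every x ∈ ℝ^m with derivative Dψ_x(X) = CX − ⟨x,X⟩_{ℝ^m} w, this derivative satisfies ⟨Dψ_x(X), Dψ_x(Y)⟩ = ⟨X,Y⟩_{ℝ^m} for all X,Y ∈ ℝ^m (in particular Dψ_x is injective), and ψ is injective. -/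
/-! Pairing with the light-like vector `v` (for which `⟨v, w⟩ = 1` and `v ⟂ range C`) reads off
`-‖x‖²/2` from `ψ x`, so `ψ x = ψ y` forces `‖x‖ = ‖y‖` and then `C x = C y`. The derivative
`X ↦ CX − ⟨x, X⟩ w` is isometric because `w` is light-like and orthogonal to `range C`; a linear
map pulling a form of any signature back to a positive definite inner product is injective, which
gives injectivity of both `C` and the derivative. -/

noncomputable section

variable {F : Type*} [NormedAddCommGroup F] [InnerProductSpace ℝ F]

theorem LinearMap.injective_of_bilinForm_apply_self {E : Type*} [AddCommGroup E] [Module ℝ E]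
    {f : F →ₗ[ℝ] E} (B : LinearMap.BilinForm ℝ E)
    (hf : ∀ X, B (f X) (f X) = inner ℝ X X) : Function.Injective f := by
  refine (injective_iff_map_eq_zero f).2 fun X hX => ?_
  rw [← inner_self_eq_zero (𝕜 := ℝ), ← hf, hX, map_zero]

theorem LinearMap.BilinForm.apply_eq_zero_of_mem_orthogonal_span_pair {E : Type*}
    [AddCommGroup E] [Module ℝ E] {B : LinearMap.BilinForm ℝ E} {v w y : E}
    (hy : y ∈ B.orthogonal (Submodule.span ℝ {v, w})) : B v y = 0 ∧ B w y = 0 := by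
  rw [LinearMap.BilinForm.mem_orthogonal_iff] at hy
  exact ⟨hy v (Submodule.subset_span (by simp)), hy w (Submodule.subset_span (by simp))⟩

variable {E : Type*} [NormedAddCommGroup E] [NormedSpace ℝ E]

def horosphereMap (v w : E) (C : F →ₗ[ℝ] E) (x : F) : E :=
  v + C x - ((1 / 2 : ℝ) * ‖x‖ ^ 2) • w

def horosphereMapDeriv [FiniteDimensional ℝ F] (w : E) (C : F →ₗ[ℝ] E) (x : F) : F →L[ℝ] E :=
  LinearMap.toContinuousLinearMap C - (innerSL ℝ x).smulRight w

@[simp]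
theorem horosphereMapDeriv_apply [FiniteDimensional ℝ F] (w : E) (C : F →ₗ[ℝ] E) (x X : F) :
    horosphereMapDeriv w C x X = C X - inner ℝ x X • w := by
  simp [horosphereMapDeriv]

theorem hasFDerivAt_horosphereMap [FiniteDimensional ℝ F] (v w : E) (C : F →ₗ[ℝ] E) (x : F) :
    HasFDerivAt (horosphereMap v w C) (horosphereMapDeriv w C x) x := by
  have hnorm := ((hasStrictFDerivAt_norm_sq x).hasFDerivAt.const_mul (1 / 2 : ℝ)).smul_const w
  convert ((hasFDerivAt_const v x).add (LinearMap.toContinuousLinearMap C).hasFDerivAt).sub hnorm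
    using 1
  · funext X
    simp [horosphereMap]
  · ext X
    simp [horosphereMapDeriv]

section LightCone

variable {ip : LinearMap.BilinForm ℝ E} {v w : E} {C : F →ₗ[ℝ] E}

theorem bilinForm_horosphereMapDeriv [FiniteDimensional ℝ F] (hipsymm : ∀ ξ η, ip ξ η = ip η ξ)
    (hww : ip w w = 0) (hwC : ∀ z, ip w (C z) = 0) (hC : ∀ X Y, ip (C X) (C Y) = inner ℝ X Y)
    (x X Y : F) :
    ip (horosphereMapDeriv w C x X) (horosphereMapDeriv w C x Y) = inner ℝ X Y := by
  have hCw : ip (C X) w = 0 := hipsymm w (C X) ▸ hwC X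
  simp [hC, hCw, hwC, hww]

theorem horosphereMap_injective (hvw : ip v w = 1) (hvC : ∀ z, ip v (C z) = 0)
    (hC : ∀ X, ip (C X) (C X) = inner ℝ X X) : Function.Injective (horosphereMap v w C) := by
  intro x y hxy
  have hnorm : ‖x‖ ^ 2 = ‖y‖ ^ 2 := by
    have := congrArg (ip v) hxy
    simp only [horosphereMap, map_add, map_sub, map_smul, hvC, hvw, smul_eq_mul] at this
    linarith
  have hCxy : C x = C y := by simpa [horosphereMap, hnorm] using hxy
  exact LinearMap.injective_of_bilinForm_apply_self ip hC hCxy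

end LightCone

end

open Module

theorem stmt_17_general
    (m : ℕ)
    {E : Type} [NormedAddCommGroup E] [NormedSpace ℝ E]
    (ip : LinearMap.BilinForm ℝ E) (hipsymm : ∀ ξ η, ip ξ η = ip η ξ)
    (v w : E)
    (hww : ip w w = 0) (hvw : ip v w = 1)
    (C : EuclideanSpace ℝ (Fin m) →ₗ[ℝ] E)
    (hCrange : LinearMap.range C = ip.orthogonal (Submodule.span ℝ {v, w}))
    (hC : ∀ x y : EuclideanSpace ℝ (Fin m), ip (C x) (C y) = inner ℝ x y)
    (ψ : EuclideanSpace ℝ (Fin m) → E)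
    (hψ : ∀ x, ψ x = v + C x - ((1 / 2 : ℝ) * ‖x‖ ^ 2) • w) :
    Function.Injective ψ ∧
    ∀ x : EuclideanSpace ℝ (Fin m), ∃ D : EuclideanSpace ℝ (Fin m) →L[ℝ] E,
      HasFDerivAt ψ D x ∧
      (∀ X : EuclideanSpace ℝ (Fin m), D X = C X - (inner ℝ x X : ℝ) • w) ∧
      (∀ X Y : EuclideanSpace ℝ (Fin m), ip (D X) (D Y) = (inner ℝ X Y : ℝ)) ∧
      Function.Injective D := by
  obtain rfl : ψ = horosphereMap v w C := funext hψ
  have hCorth (z) : ip v (C z) = 0 ∧ ip w (C z) = 0 :=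
    LinearMap.BilinForm.apply_eq_zero_of_mem_orthogonal_span_pair
      (hCrange ▸ LinearMap.mem_range_self C z)
  have hDiso := bilinForm_horosphereMapDeriv hipsymm hww (fun z => (hCorth z).2) hC
  refine ⟨horosphereMap_injective hvw (fun z => (hCorth z).1) (fun X => hC X X), fun x =>
    ⟨horosphereMapDeriv w C x, hasFDerivAt_horosphereMap v w C x,
      horosphereMapDeriv_apply w C x, hDiso x, ?_⟩⟩
  exact LinearMap.injective_of_bilinForm_apply_self (f := (horosphereMapDeriv w C x).toLinearMap)
    ip fun X => hDiso x X X

/-- ψ is an injective isometric immersion: it is differentiable with derivative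
Dψₓ(X) = CX − ⟨x,X⟩w, which satisfies ⟨Dψₓ(X),Dψₓ(Y)⟩ = ⟨X,Y⟩ (in particular
Dψₓ is injective), and ψ itself is injective. -/
theorem stmt_17
    (m : ℕ)
    {E : Type} [NormedAddCommGroup E] [NormedSpace ℝ E] [FiniteDimensional ℝ E]
    (hE : finrank ℝ E = m + 2)
    (ip : LinearMap.BilinForm ℝ E) (hipsymm : ∀ ξ η, ip ξ η = ip η ξ)
    (e : Basis (Fin (m + 2)) ℝ E)
    (he : ∀ i j, ip (e i) (e j) =
      if i = j then (if (i : ℕ) = 0 then (-1 : ℝ) else 1) else 0)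
    (v w : E) (hv0 : v ≠ 0) (hw0 : w ≠ 0)
    (hvv : ip v v = 0) (hww : ip w w = 0) (hvw : ip v w = 1)
    (C : EuclideanSpace ℝ (Fin m) →ₗ[ℝ] E)
    (hCinj : Function.Injective C)
    (hCrange : LinearMap.range C = ip.orthogonal (Submodule.span ℝ {v, w}))
    (hC : ∀ x y : EuclideanSpace ℝ (Fin m), ip (C x) (C y) = inner ℝ x y)
    (ψ : EuclideanSpace ℝ (Fin m) → E)
    (hψ : ∀ x, ψ x = v + C x - ((1 / 2 : ℝ) * ‖x‖ ^ 2) • w) :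
    Function.Injective ψ ∧
    ∀ x : EuclideanSpace ℝ (Fin m), ∃ D : EuclideanSpace ℝ (Fin m) →L[ℝ] E,
      HasFDerivAt ψ D x ∧
      (∀ X : EuclideanSpace ℝ (Fin m), D X = C X - (inner ℝ x X : ℝ) • w) ∧
      (∀ X Y : EuclideanSpace ℝ (Fin m), ip (D X) (D Y) = (inner ℝ X Y : ℝ)) ∧
      Function.Injective D :=
  stmt_17_general m ip hipsymm v w hww hvw C hCrange hC ψ hψ
end
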